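/- arXiv:math/0402438 — 6 statements merged into one kernel-verified Lean document; each statement's English description precedes it below -/
import Mathlib

section
/- Fix exponent matrices A_0, …, A_d ∈ (ℝ ∪ {+∞})^{n×n} and a finite corner γ of P_A, of multiplicity μ. Let ν be the sum of the multiplicities of the finite corners of P_A that are strictly greater than γ, plus the valuation of P_A (the smallest k such that the coefficient of X^k in P_A is ≠ 𝟘), which is the multiplicity of the corner 𝟘 = +∞. Then there exists a nonzero polynomial Φ, with complex coefficients, in the family of variables { (a_k)_{ij} : 0 ≤ k ≤ d, (A_k)_{ij} < +∞ }, such that for every choice of complex matrices a_0, …, a_d with Φ((a_k)_{ij}) ≠ 0, the auxiliary pencil a^{(γ)} built with the graphs G_k = Opt_k(γ) satisfies: det(a^{(γ)}) ∈ ℂ[X] has exactly μ nonzero roots counted with multiplicity, and 0 is a root of det(a^{(γ)}) of multiplicity exactly ν. -/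
/-!
The coefficient of `X^m` in `det a^{(γ)}` is a signed sum of monomials, one for each pair `(σ, κ)`
of a permutation and an exponent choice with `Σ κ = m` all of whose entries are arcs of the graphs
`Opt_{κ i}(γ)`. By Birkhoff's theorem a permutation each of whose arcs lies on some optimal
assignment of `Â(γ)` is itself optimal; together with `perm Â(γ) = P̂_A(γ)` this shows that such a
pair exists exactly when `m` is an active slope of `P̂_A` at `γ`. So `det a^{(γ)}` is supported on
the active slopes, and the generic coefficients at the smallest and the largest active slope are
nonzero polynomials: their product is `Φ`. When `Φ(a) ≠ 0`, the valuation and the degree of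
`det a^{(γ)}` are these two slopes, i.e. the right and left derivatives of `P̂_A` at `γ`. Their
difference is the multiplicity of `γ`, and the right derivative telescopes through the corners to
the right of `γ` down to the valuation of `P_A`.
-/

open Polynomial Filter Topology Finset

noncomputable section

/-- The min-plus semiring `ℝ ∪ {+∞}`, with `min` as addition and `+` as
multiplication (so `⊤ = +∞` is the min-plus zero `𝟘`). -/
abbrev Rmin := WithTop ℝ

/-- Min-plus permanent of a matrix: `perm B = min_σ Σ_i B_{i σ(i)}`. -/
def mpPerm {n : ℕ} (B : Matrix (Fin n) (Fin n) Rmin) : Rmin :=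
  Finset.univ.inf fun σ : Equiv.Perm (Fin n) => ∑ i, B i (σ i)

/-- Coefficient of `X^m` in the min-plus characteristic polynomial
`P_A = perm (A_0 ⊕ X A_1 ⊕ ⋯ ⊕ X^d A_d)`: expanding the min-plus permanent of the
pencil, the coefficient of `X^m` is the min over permutations `σ` and over
exponent choices `κ : Fin n → Fin (d+1)` with `Σ_i κ i = m` of `Σ_i (A_{κ i})_{i σ(i)}`. -/
def PAcoeff {n d : ℕ} (A : Fin (d + 1) → Matrix (Fin n) (Fin n) Rmin) (m : ℕ) : Rmin :=
  Finset.univ.inf fun σ : Equiv.Perm (Fin n) =>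
    (Finset.univ.filter fun κ : Fin n → Fin (d + 1) => ∑ i, (κ i : ℕ) = m).inf
      fun κ => ∑ i, A (κ i) i (σ i)

/-- The polynomial function `P̂_A(γ) = min_m (P_m + m γ)` associated with the formal
min-plus characteristic polynomial `P_A` (whose degree is at most `n * d`). -/
def PAhat {n d : ℕ} (A : Fin (d + 1) → Matrix (Fin n) (Fin n) Rmin) (γ : ℝ) : Rmin :=
  (Finset.range (n * d + 1)).inf fun m => PAcoeff A m + (((m : ℝ) * γ : ℝ) : Rmin)

/-- The set of exponents `m` achieving the minimum in `P̂_A(γ)` with a finite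
coefficient (the "active" slopes of the concave piecewise linear function `P̂_A` at `γ`). -/
def activeSet {n d : ℕ} (A : Fin (d + 1) → Matrix (Fin n) (Fin n) Rmin) (γ : ℝ) : Finset ℕ :=
  (Finset.range (n * d + 1)).filter fun m =>
    PAcoeff A m ≠ ⊤ ∧ PAcoeff A m + (((m : ℝ) * γ : ℝ) : Rmin) = PAhat A γ

/-- `γ ∈ ℝ` is a finite corner of `P_A` iff the piecewise linear concave function `P̂_A`
is not differentiable at `γ`, i.e. at least two distinct slopes are active at `γ`. -/
def IsFiniteCorner {n d : ℕ} (A : Fin (d + 1) → Matrix (Fin n) (Fin n) Rmin) (γ : ℝ) : Prop :=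
  ∃ m₁ ∈ activeSet A γ, ∃ m₂ ∈ activeSet A γ, m₁ ≠ m₂

/-- Multiplicity of a finite corner `γ`: `P̂_A'(γ⁻) - P̂_A'(γ⁺)`, i.e. the largest active
slope minus the smallest active slope at `γ`. -/
def cornerMult {n d : ℕ} (A : Fin (d + 1) → Matrix (Fin n) (Fin n) Rmin) (γ : ℝ) : ℕ :=
  (activeSet A γ).sup id - ((activeSet A γ).min).getD 0

/-- Valuation of `P_A`: smallest `k` whose coefficient is `≠ 𝟘`; this is the
multiplicity of the corner `𝟘 = +∞`. -/
def PAval {n d : ℕ} (A : Fin (d + 1) → Matrix (Fin n) (Fin n) Rmin) : ℕ :=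
  sInf {m | PAcoeff A m ≠ ⊤}

/-- Degree of `P_A`: largest `k` whose coefficient is `≠ 𝟘`. -/
def PAdeg {n d : ℕ} (A : Fin (d + 1) → Matrix (Fin n) (Fin n) Rmin) : ℕ :=
  sSup {m | PAcoeff A m ≠ ⊤}

/-- The matrix `Â(γ)`, with entries `Â_{ij}(γ) = min_{0 ≤ k ≤ d} ((A_k)_{ij} + k γ)`. -/
def AhatMat {n d : ℕ} (A : Fin (d + 1) → Matrix (Fin n) (Fin n) Rmin) (γ : ℝ) :
    Matrix (Fin n) (Fin n) Rmin :=
  fun i j => Finset.univ.inf fun k : Fin (d + 1) => A k i j + ((((k : ℕ) : ℝ) * γ : ℝ) : Rmin)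

/-- `(i,j)` is an arc of the digraph `Opt(B)` of arcs belonging to optimal assignments. -/
def OptArc {n : ℕ} (B : Matrix (Fin n) (Fin n) Rmin) (i j : Fin n) : Prop :=
  ∃ σ : Equiv.Perm (Fin n), σ i = j ∧ (∑ l, B l (σ l)) = mpPerm B

/-- `(i,j)` is an arc of the digraph `Opt_k(γ)`. -/
def OptK {n d : ℕ} (A : Fin (d + 1) → Matrix (Fin n) (Fin n) Rmin) (γ : ℝ)
    (k : Fin (d + 1)) (i j : Fin n) : Prop :=
  OptArc (AhatMat A γ) i j ∧ A k i j + ((((k : ℕ) : ℝ) * γ : ℝ) : Rmin) = AhatMat A γ i j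

/-- `(U, V)` is a Hungarian pair with respect to `B`. -/
def HungarianPair {n : ℕ} (B : Matrix (Fin n) (Fin n) Rmin) (U V : Fin n → ℝ) : Prop :=
  (∀ i j, ((U i + V j : ℝ) : Rmin) ≤ B i j) ∧
    (((∑ i, U i) + ∑ j, V j : ℝ) : Rmin) = mpPerm B

/-- `(i,j)` is an arc of the saturation graph `Sat(B,U,V)`. -/
def SatArc {n : ℕ} (B : Matrix (Fin n) (Fin n) Rmin) (U V : Fin n → ℝ) (i j : Fin n) : Prop :=
  B i j = ((U i + V j : ℝ) : Rmin)

/-- `(i,j)` is an arc of the digraph `Sat_k(γ, U, V)`. -/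
def SatK {n d : ℕ} (A : Fin (d + 1) → Matrix (Fin n) (Fin n) Rmin) (γ : ℝ)
    (U V : Fin n → ℝ) (k : Fin (d + 1)) (i j : Fin n) : Prop :=
  SatArc (AhatMat A γ) U V i j ∧
    A k i j + ((((k : ℕ) : ℝ) * γ : ℝ) : Rmin) = AhatMat A γ i j

open Classical in
/-- `b^G` : keep the entries of `b` on the arcs of the digraph `G`, set others to `0`. -/
def restrictG {n : ℕ} (b : Matrix (Fin n) (Fin n) ℂ) (G : Fin n → Fin n → Prop) :
    Matrix (Fin n) (Fin n) ℂ :=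
  fun i j => if G i j then b i j else 0

/-- The auxiliary pencil `a^{(γ)} = a_0^{G_0} + X a_1^{G_1} + ⋯ + X^d a_d^{G_d}`
built from digraphs `G_0, …, G_d`, as a matrix of polynomials in `ℂ[X]`. -/
def auxPencil {n d : ℕ} (a : Fin (d + 1) → Matrix (Fin n) (Fin n) ℂ)
    (G : Fin (d + 1) → Fin n → Fin n → Prop) : Matrix (Fin n) (Fin n) (Polynomial ℂ) :=
  fun i j => ∑ k : Fin (d + 1), Polynomial.C (restrictG (a k) (G k) i j) * X ^ (k : ℕ)

/-- The polynomial `det 𝒜_ε ∈ ℂ[X]` of the perturbed pencil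
`𝒜_ε = 𝒜_{ε,0} + X 𝒜_{ε,1} + ⋯ + X^d 𝒜_{ε,d}`, whose roots are the eigenvalues. -/
def pencilPoly {n d : ℕ} (𝒜 : ℝ → Fin (d + 1) → Matrix (Fin n) (Fin n) ℂ) (ε : ℝ) :
    Polynomial ℂ :=
  Matrix.det fun i j => ∑ k : Fin (d + 1), Polynomial.C (𝒜 ε k i j) * X ^ (k : ℕ)

/-- The perturbed pencil `𝒜_ε` has the asymptotics given by `(a_k, A_k)`:
`(𝒜_{ε,k})_{ij} = (a_k)_{ij} ε^{(A_k)_{ij}} + o(ε^{(A_k)_{ij}})` as `ε → 0⁺`,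
where `(A_k)_{ij} = +∞` means that the entry vanishes in a neighborhood of `0`. -/
def HasAsymptotics {n d : ℕ} (𝒜 : ℝ → Fin (d + 1) → Matrix (Fin n) (Fin n) ℂ)
    (a : Fin (d + 1) → Matrix (Fin n) (Fin n) ℂ)
    (A : Fin (d + 1) → Matrix (Fin n) (Fin n) Rmin) : Prop :=
  ∀ k i j,
    (A k i j = ⊤ → ∀ᶠ ε in 𝓝[>] (0 : ℝ), 𝒜 ε k i j = 0) ∧
    (∀ t : ℝ, A k i j = (t : Rmin) →
      (fun ε : ℝ => 𝒜 ε k i j - a k i j * ((ε ^ t : ℝ) : ℂ)) =o[𝓝[>] (0 : ℝ)]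
        fun ε : ℝ => (ε ^ t : ℝ))

open scoped Matrix

section Assignment

variable {ι : Type*} [DecidableEq ι]

lemma permMatrix_apply_eq_ite (π : Equiv.Perm ι) (i j : ι) :
    π.permMatrix ℝ i j = if π i = j then 1 else 0 := by
  simp [Equiv.Perm.permMatrix, PEquiv.toMatrix_apply, Equiv.toPEquiv_apply]

variable [Fintype ι]

lemma trace_permMatrix_mul_transpose (π : Equiv.Perm ι) (b : Matrix ι ι ℝ) :
    (π.permMatrix ℝ * bᵀ).trace = ∑ i, b i (π i) := by
  simp [Matrix.trace, Matrix.mul_apply]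

lemma exists_sum_permMatrix_sub_permMatrix_eq_smul [Nonempty ι] {σ : ι → Equiv.Perm ι}
    {τ : Equiv.Perm ι} (hτ : ∀ i, σ i i = τ i) :
    ∃ D ∈ doublyStochastic ℝ ι,
      ∑ i, (σ i).permMatrix ℝ - τ.permMatrix ℝ = ((Fintype.card ι : ℝ) - 1) • D := by
  have hentry : ∀ (π : Equiv.Perm ι) l j, 0 ≤ π.permMatrix ℝ l j := fun _ _ _ =>
    nonneg_of_mem_doublyStochastic permMatrix_mem_doublyStochastic
  refine (exists_mem_doublyStochastic_eq_smul_iff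
    (sub_nonneg.mpr (Nat.one_le_cast.mpr Fintype.card_pos))).mpr ⟨fun l j => ?_, fun l => ?_,
      fun j => ?_⟩
  · rw [Matrix.sub_apply, Matrix.sum_apply, sub_nonneg]
    calc τ.permMatrix ℝ l j = (σ l).permMatrix ℝ l j := by
          simp only [permMatrix_apply_eq_ite, hτ]
      _ ≤ ∑ i, (σ i).permMatrix ℝ l j :=
          Finset.single_le_sum (f := fun i => (σ i).permMatrix ℝ l j)
            (fun i _ => hentry _ _ _) (Finset.mem_univ l)
  · simp only [Matrix.sub_apply, Matrix.sum_apply, Finset.sum_sub_distrib]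
    rw [Finset.sum_comm]
    simp only [sum_row_of_mem_doublyStochastic permMatrix_mem_doublyStochastic, Finset.sum_const,
      Finset.card_univ, nsmul_eq_mul, mul_one]
  · simp only [Matrix.sub_apply, Matrix.sum_apply, Finset.sum_sub_distrib]
    rw [Finset.sum_comm]
    simp only [sum_col_of_mem_doublyStochastic permMatrix_mem_doublyStochastic, Finset.sum_const,
      Finset.card_univ, nsmul_eq_mul, mul_one]

lemma le_sum_smul_permMatrix_apply {w : Equiv.Perm ι → ℝ} (hw : ∀ π, 0 ≤ w π)
    (π : Equiv.Perm ι) (l : ι) : w π ≤ (∑ π', w π' • π'.permMatrix ℝ) l (π l) := by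
  rw [Matrix.sum_apply]
  calc w π = (w π • π.permMatrix ℝ) l (π l) := by simp
    _ ≤ _ := Finset.single_le_sum (f := fun π' => (w π' • π'.permMatrix ℝ) l (π l))
        (fun π' _ => mul_nonneg (hw π')
          (nonneg_of_mem_doublyStochastic permMatrix_mem_doublyStochastic))
        (Finset.mem_univ π)

theorem sum_le_of_forall_arc_mem_optimal [Nonempty ι] (b : Matrix ι ι ℝ) (p : ℝ)
    (σ : ι → Equiv.Perm ι) (hσ : ∀ i, ∑ l, b l (σ i l) = p)
    (hopt : ∀ π : Equiv.Perm ι, (∀ l, ∃ i, σ i l = π l) → p ≤ ∑ l, b l (π l))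
    (τ : Equiv.Perm ι) (hτ : ∀ i, σ i i = τ i) : ∑ l, b l (τ l) ≤ p := by
  rcases le_or_gt (Fintype.card ι) 1 with hcard | hcard
  · have := Fintype.card_le_one_iff_subsingleton.mp hcard
    obtain ⟨i⟩ := ‹Nonempty ι›
    rw [Subsingleton.elim τ (σ i), hσ i]
  have hs : (0 : ℝ) < Fintype.card ι - 1 := sub_pos.mpr (by exact_mod_cast hcard)
  -- Birkhoff: `∑ i, P_{σ i} - P_τ` is a positive multiple of a convex combination of permutation
  -- matrices, all supported on arcs of the `σ i`.
  obtain ⟨D, hD, hSD⟩ := exists_sum_permMatrix_sub_permMatrix_eq_smul hτ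
  obtain ⟨w, hw0, hw1, rfl⟩ := exists_eq_sum_perm_of_mem_doublyStochastic hD
  have hsupport : ∀ π, 0 < w π → ∀ l, ∃ i, σ i l = π l := by
    intro π hπ l
    by_contra! h
    have hentry := congr_fun (congr_fun hSD l) (π l)
    rw [Matrix.sub_apply, Matrix.sum_apply, Finset.sum_eq_zero fun i _ => by
      rw [permMatrix_apply_eq_ite, if_neg (h i)], Matrix.smul_apply, smul_eq_mul] at hentry
    nlinarith [le_sum_smul_permMatrix_apply hw0 π l,
      nonneg_of_mem_doublyStochastic (permMatrix_mem_doublyStochastic (R := ℝ) (σ := τ))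
        (i := l) (j := π l)]
  have hlower : p ≤ ∑ π, w π * ∑ l, b l (π l) := by
    calc p = ∑ π, w π * p := by rw [← Finset.sum_mul, hw1, one_mul]
      _ ≤ _ := Finset.sum_le_sum fun π _ => (hw0 π).eq_or_lt.elim
          (fun h => by rw [← h, zero_mul, zero_mul])
          (fun h => mul_le_mul_of_nonneg_left (hopt π (hsupport π h)) (hw0 π))
  -- Pairing with `b`: `card ι * p - ∑ l, b l (τ l) = (card ι - 1) * ∑ π, w π * ∑ l, b l (π l)`.
  have htrace := congr_arg (fun M => (M * bᵀ).trace) hSD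
  simp only [Matrix.sub_mul, Matrix.trace_sub, Matrix.sum_mul, Matrix.trace_sum,
    Matrix.smul_mul, Matrix.trace_smul, trace_permMatrix_mul_transpose, hσ, Finset.sum_const,
    Finset.card_univ, nsmul_eq_mul, smul_eq_mul] at htrace
  nlinarith [mul_le_mul_of_nonneg_left hlower hs.le]

end Assignment

section MinPlusPermanent

variable {n : ℕ}

lemma mpPerm_le (B : Matrix (Fin n) (Fin n) Rmin) (σ : Equiv.Perm (Fin n)) :
    mpPerm B ≤ ∑ i, B i (σ i) :=
  Finset.inf_le (Finset.mem_univ σ)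

lemma exists_mpPerm_eq (B : Matrix (Fin n) (Fin n) Rmin) :
    ∃ σ : Equiv.Perm (Fin n), mpPerm B = ∑ i, B i (σ i) := by
  obtain ⟨σ, -, h⟩ := Finset.exists_mem_eq_inf Finset.univ Finset.univ_nonempty
    (fun σ : Equiv.Perm (Fin n) => ∑ i, B i (σ i))
  exact ⟨σ, h⟩

theorem sum_eq_mpPerm_of_forall_optArc (hn : 0 < n) {B : Matrix (Fin n) (Fin n) Rmin}
    (hB : mpPerm B ≠ ⊤) {τ : Equiv.Perm (Fin n)} (hτ : ∀ i, OptArc B i (τ i)) :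
    ∑ i, B i (τ i) = mpPerm B := by
  have : Nonempty (Fin n) := Fin.pos_iff_nonempty.mp hn
  choose σ hστ hσ using hτ
  have hcoe : ∀ π : Equiv.Perm (Fin n), (∀ l, ∃ i, σ i l = π l) →
      ∑ l, B l (π l) = ((∑ l, (B l (π l)).untop₀ : ℝ) : Rmin) := by
    intro π hπ
    rw [WithTop.coe_sum]
    refine Finset.sum_congr rfl fun l _ => (WithTop.coe_untop₀_of_ne_top ?_).symm
    obtain ⟨i, hi⟩ := hπ l
    rw [← hi]
    exact WithTop.sum_ne_top.mp (hσ i ▸ hB) l (Finset.mem_univ l)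
  have hp : mpPerm B = (((mpPerm B).untop₀ : ℝ) : Rmin) :=
    (WithTop.coe_untop₀_of_ne_top hB).symm
  refine le_antisymm ?_ (mpPerm_le B τ)
  rw [hcoe τ fun l => ⟨l, hστ l⟩, hp, WithTop.coe_le_coe]
  refine sum_le_of_forall_arc_mem_optimal (fun l j => (B l j).untop₀) _ σ (fun i => ?_)
    (fun π hπ => ?_) τ hστ
  · have := hσ i
    rw [hcoe _ fun l => ⟨i, rfl⟩, hp] at this
    exact_mod_cast this
  · have := mpPerm_le B π
    rw [hcoe π hπ, hp] at this
    exact_mod_cast this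

end MinPlusPermanent

lemma WithTop.eq_of_forall_le_of_sum_eq {α ι : Type*} [AddCommMonoid α] [LinearOrder α]
    [IsOrderedCancelAddMonoid α] {s : Finset ι} {f g : ι → WithTop α}
    (hfg : ∀ i ∈ s, f i ≤ g i) (hsum : ∑ i ∈ s, f i = ∑ i ∈ s, g i)
    (htop : ∑ i ∈ s, g i ≠ ⊤) : ∀ i ∈ s, f i = g i := by
  classical
  intro i hi
  by_contra hne
  have herase : ∑ j ∈ s.erase i, g j ≠ ⊤ := fun h =>
    htop (by rw [← Finset.add_sum_erase s g hi, h, WithTop.add_top])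
  refine hsum.not_lt ?_
  rw [← Finset.add_sum_erase s f hi, ← Finset.add_sum_erase s g hi]
  calc f i + ∑ j ∈ s.erase i, f j ≤ f i + ∑ j ∈ s.erase i, g j :=
        add_le_add_right (Finset.sum_le_sum fun j hj => hfg j (Finset.mem_of_mem_erase hj)) _
    _ < g i + ∑ j ∈ s.erase i, g j :=
        WithTop.add_lt_add_right herase ((hfg i hi).lt_of_ne hne)

section Pencil

variable {n d : ℕ} (A : Fin (d + 1) → Matrix (Fin n) (Fin n) Rmin) (γ : ℝ)

lemma sum_val_le_mul (κ : Fin n → Fin (d + 1)) : ∑ i, (κ i : ℕ) ≤ n * d := by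
  calc ∑ i, (κ i : ℕ) ≤ ∑ _i : Fin n, d := Finset.sum_le_sum fun i _ => Fin.is_le (κ i)
    _ = n * d := by simp

lemma sum_add_coe_mul (σ : Equiv.Perm (Fin n)) (κ : Fin n → Fin (d + 1)) :
    ∑ i, (A (κ i) i (σ i) + ((((κ i : ℕ) : ℝ) * γ : ℝ) : Rmin)) =
      ∑ i, A (κ i) i (σ i) + ((((∑ i, (κ i : ℕ) : ℕ) : ℝ) * γ : ℝ) : Rmin) := by
  rw [Finset.sum_add_distrib, Nat.cast_sum, Finset.sum_mul, WithTop.coe_sum]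

lemma PAcoeff_le (σ : Equiv.Perm (Fin n)) (κ : Fin n → Fin (d + 1)) :
    PAcoeff A (∑ i, (κ i : ℕ)) ≤ ∑ i, A (κ i) i (σ i) :=
  (Finset.inf_le (Finset.mem_univ σ)).trans
    (Finset.inf_le (Finset.mem_filter.mpr ⟨Finset.mem_univ κ, rfl⟩))

lemma exists_PAcoeff_eq {m : ℕ} (hm : PAcoeff A m ≠ ⊤) :
    ∃ (σ : Equiv.Perm (Fin n)) (κ : Fin n → Fin (d + 1)),
      ∑ i, (κ i : ℕ) = m ∧ PAcoeff A m = ∑ i, A (κ i) i (σ i) := by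
  rw [PAcoeff] at hm ⊢
  obtain ⟨σ, -, hσ⟩ := Finset.exists_mem_eq_inf (Finset.univ : Finset (Equiv.Perm (Fin n)))
    Finset.univ_nonempty fun σ => (Finset.univ.filter fun κ : Fin n → Fin (d + 1) =>
      ∑ i, (κ i : ℕ) = m).inf fun κ => ∑ i, A (κ i) i (σ i)
  rw [hσ] at hm ⊢
  have hne : (Finset.univ.filter fun κ : Fin n → Fin (d + 1) => ∑ i, (κ i : ℕ) = m).Nonempty :=
    Finset.nonempty_iff_ne_empty.mpr fun h => hm (by rw [h, Finset.inf_empty])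
  obtain ⟨κ, hκ, hκeq⟩ := Finset.exists_mem_eq_inf _ hne (fun κ => ∑ i, A (κ i) i (σ i))
  exact ⟨σ, κ, (Finset.mem_filter.mp hκ).2, hκeq⟩

lemma PAhat_le_sum (σ : Equiv.Perm (Fin n)) (κ : Fin n → Fin (d + 1)) :
    PAhat A γ ≤ ∑ i, (A (κ i) i (σ i) + ((((κ i : ℕ) : ℝ) * γ : ℝ) : Rmin)) := by
  rw [sum_add_coe_mul]
  exact (Finset.inf_le (Finset.mem_range_succ_iff.mpr (sum_val_le_mul κ))).trans
    (add_le_add_left (PAcoeff_le A σ κ) _)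

lemma AhatMat_le (k : Fin (d + 1)) (i j : Fin n) :
    AhatMat A γ i j ≤ A k i j + ((((k : ℕ) : ℝ) * γ : ℝ) : Rmin) :=
  Finset.inf_le (Finset.mem_univ k)

theorem mpPerm_AhatMat : mpPerm (AhatMat A γ) = PAhat A γ := by
  refine le_antisymm (Finset.le_inf fun m _ => ?_) ?_
  · by_cases hm : PAcoeff A m = ⊤
    · rw [hm, top_add]
      exact le_top
    obtain ⟨σ, κ, rfl, hσκ⟩ := exists_PAcoeff_eq A hm
    rw [hσκ, ← sum_add_coe_mul]
    exact (mpPerm_le _ σ).trans (Finset.sum_le_sum fun i _ => AhatMat_le A γ (κ i) i (σ i))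
  · obtain ⟨σ, hσ⟩ := exists_mpPerm_eq (AhatMat A γ)
    choose κ hκ using fun i => Finset.exists_mem_eq_inf Finset.univ Finset.univ_nonempty
      fun k : Fin (d + 1) => A k i (σ i) + ((((k : ℕ) : ℝ) * γ : ℝ) : Rmin)
    rw [hσ]
    refine (PAhat_le_sum A γ σ κ).trans_eq (Finset.sum_congr rfl fun i _ => ?_)
    exact (hκ i).2.symm

end Pencil

section OptimalTerm

variable {n d : ℕ} (A : Fin (d + 1) → Matrix (Fin n) (Fin n) Rmin) (γ : ℝ)

/-- The term `(σ, κ)` of the expansion of `det a^{(γ)}` survives the restriction to the graphs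
`Opt_k(γ)`. -/
def IsOptimalTerm (σ : Equiv.Perm (Fin n)) (κ : Fin n → Fin (d + 1)) : Prop :=
  ∀ i, OptK A γ (κ i) i (σ i)

variable {A γ}

lemma OptK.ne_top (hfin : PAhat A γ ≠ ⊤) {k : Fin (d + 1)} {i j : Fin n}
    (h : OptK A γ k i j) : A k i j ≠ ⊤ := by
  obtain ⟨⟨σ, hσi, hσ⟩, hk⟩ := h
  have hB : ∑ l, AhatMat A γ l (σ l) ≠ ⊤ := by rwa [hσ, mpPerm_AhatMat]
  intro htop
  rw [htop, top_add, ← hσi] at hk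
  exact WithTop.sum_ne_top.mp hB i (Finset.mem_univ i) hk.symm

lemma IsOptimalTerm.sum_val_mem_activeSet (hn : 0 < n) (hfin : PAhat A γ ≠ ⊤)
    {σ : Equiv.Perm (Fin n)} {κ : Fin n → Fin (d + 1)} (h : IsOptimalTerm A γ σ κ) :
    ∑ i, (κ i : ℕ) ∈ activeSet A γ := by
  have hB : mpPerm (AhatMat A γ) ≠ ⊤ := by rwa [mpPerm_AhatMat]
  have hsum : ∑ i, A (κ i) i (σ i) + ((((∑ i, (κ i : ℕ) : ℕ) : ℝ) * γ : ℝ) : Rmin) =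
      PAhat A γ := by
    rw [← sum_add_coe_mul, ← mpPerm_AhatMat,
      ← sum_eq_mpPerm_of_forall_optArc hn hB fun i => (h i).1]
    exact Finset.sum_congr rfl fun i _ => (h i).2
  have heq : PAcoeff A (∑ i, (κ i : ℕ)) + ((((∑ i, (κ i : ℕ) : ℕ) : ℝ) * γ : ℝ) : Rmin) =
      PAhat A γ :=
    le_antisymm (hsum ▸ add_le_add_left (PAcoeff_le A σ κ) _)
      (Finset.inf_le (Finset.mem_range_succ_iff.mpr (sum_val_le_mul κ)))
  refine Finset.mem_filter.mpr
    ⟨Finset.mem_range_succ_iff.mpr (sum_val_le_mul κ), fun htop => ?_, heq⟩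
  rw [htop, top_add] at heq
  exact hfin heq.symm

lemma exists_isOptimalTerm (hfin : PAhat A γ ≠ ⊤) {m : ℕ} (hm : m ∈ activeSet A γ) :
    ∃ (σ : Equiv.Perm (Fin n)) (κ : Fin n → Fin (d + 1)),
      IsOptimalTerm A γ σ κ ∧ ∑ i, (κ i : ℕ) = m := by
  obtain ⟨-, hne, heq⟩ := Finset.mem_filter.mp hm
  obtain ⟨σ, κ, hκ, hσκ⟩ := exists_PAcoeff_eq A hne
  have hg : ∑ i, (A (κ i) i (σ i) + ((((κ i : ℕ) : ℝ) * γ : ℝ) : Rmin)) =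
      mpPerm (AhatMat A γ) := by
    rw [sum_add_coe_mul, hκ, ← hσκ, heq, mpPerm_AhatMat]
  have hle : ∀ i ∈ Finset.univ, AhatMat A γ i (σ i) ≤
      A (κ i) i (σ i) + ((((κ i : ℕ) : ℝ) * γ : ℝ) : Rmin) :=
    fun i _ => AhatMat_le A γ (κ i) i (σ i)
  have hσ : ∑ i, AhatMat A γ i (σ i) = mpPerm (AhatMat A γ) :=
    le_antisymm (hg ▸ Finset.sum_le_sum hle) (mpPerm_le _ σ)
  have htight := WithTop.eq_of_forall_le_of_sum_eq hle (hσ.trans hg.symm)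
    (by rwa [hg, mpPerm_AhatMat])
  exact ⟨σ, κ, fun i => ⟨⟨σ, rfl, hσ⟩, (htight i (Finset.mem_univ i)).symm⟩, hκ⟩

end OptimalTerm

open Polynomial in
lemma coeff_det_sum_C_mul_X_pow {R : Type*} [CommRing R] {n D : ℕ}
    (c : Fin D → Matrix (Fin n) (Fin n) R) (m : ℕ) :
    (Matrix.of fun i j => ∑ k, C (c k i j) * X ^ (k : ℕ)).det.coeff m =
      ∑ σ : Equiv.Perm (Fin n), ∑ κ ∈ Finset.univ.filter
        (fun κ : Fin n → Fin D => ∑ i, (κ i : ℕ) = m),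
          ((Equiv.Perm.sign σ : ℤ) : R) * ∏ i, c (κ i) i (σ i) := by
  rw [← Matrix.det_transpose, Matrix.det_apply', finsetSum_coeff]
  refine Finset.sum_congr rfl fun σ _ => ?_
  simp only [Matrix.transpose_apply, Matrix.of_apply, Finset.prod_univ_sum, Fintype.piFinset_univ,
    Finset.prod_mul_distrib, ← map_prod, Finset.prod_pow_eq_pow_sum, Finset.mul_sum,
    finsetSum_coeff, coeff_intCast_mul, coeff_C_mul_X_pow, Finset.sum_filter]
  refine Finset.sum_congr rfl fun κ _ => ?_
  split_ifs <;> simp_all [eq_comm]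

section Generic

variable {n d : ℕ} (A : Fin (d + 1) → Matrix (Fin n) (Fin n) Rmin) (γ : ℝ)

lemma auxPencil_eq_of (a : Fin (d + 1) → Matrix (Fin n) (Fin n) ℂ)
    (G : Fin (d + 1) → Fin n → Fin n → Prop) :
    auxPencil a G = Matrix.of fun i j =>
      ∑ k, Polynomial.C (restrictG (a k) (G k) i j) * Polynomial.X ^ (k : ℕ) :=
  rfl

abbrev FiniteEntry : Type :=
  {p : Fin (d + 1) × Fin n × Fin n // A p.1 p.2.1 p.2.2 ≠ ⊤}

open Classical in
/-- The matrix `a_k^{Opt_k(γ)}` with the entries of `a_k` replaced by indeterminates. -/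
def genericRestricted (k : Fin (d + 1)) : Matrix (Fin n) (Fin n) (MvPolynomial (FiniteEntry A) ℂ) :=
  fun i j => if h : OptK A γ k i j ∧ A k i j ≠ ⊤ then MvPolynomial.X ⟨(k, i, j), h.2⟩ else 0

def genericCoeff (m : ℕ) : MvPolynomial (FiniteEntry A) ℂ :=
  (Matrix.of fun i j =>
    ∑ k, Polynomial.C (genericRestricted A γ k i j) * Polynomial.X ^ (k : ℕ)).det.coeff m

variable {A γ}

lemma eval_genericCoeff (hfin : PAhat A γ ≠ ⊤) (m : ℕ)
    (a : Fin (d + 1) → Matrix (Fin n) (Fin n) ℂ) :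
    MvPolynomial.eval (fun p => a p.1.1 p.1.2.1 p.1.2.2) (genericCoeff A γ m) =
      (auxPencil a (OptK A γ)).det.coeff m := by
  rw [genericCoeff, coeff_det_sum_C_mul_X_pow, auxPencil_eq_of, coeff_det_sum_C_mul_X_pow]
  simp only [map_sum, map_mul, map_prod, map_intCast]
  refine Finset.sum_congr rfl fun σ _ => Finset.sum_congr rfl fun κ _ => ?_
  congr 1
  refine Finset.prod_congr rfl fun i _ => ?_
  by_cases h : OptK A γ (κ i) i (σ i)
  · rw [genericRestricted, dif_pos ⟨h, h.ne_top hfin⟩, MvPolynomial.eval_X, restrictG, if_pos h]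
  · rw [genericRestricted, dif_neg fun h' => h h'.1, map_zero, restrictG, if_neg h]

lemma coeff_det_auxPencil_eq_zero (hn : 0 < n) (hfin : PAhat A γ ≠ ⊤) {m : ℕ}
    (hm : m ∉ activeSet A γ) (a : Fin (d + 1) → Matrix (Fin n) (Fin n) ℂ) :
    (auxPencil a (OptK A γ)).det.coeff m = 0 := by
  rw [auxPencil_eq_of, coeff_det_sum_C_mul_X_pow]
  refine Finset.sum_eq_zero fun σ _ => Finset.sum_eq_zero fun κ hκ => ?_
  obtain ⟨i, hi⟩ : ∃ i, ¬OptK A γ (κ i) i (σ i) := by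
    by_contra! h
    exact hm ((Finset.mem_filter.mp hκ).2 ▸ IsOptimalTerm.sum_val_mem_activeSet hn hfin h)
  rw [Finset.prod_eq_zero (Finset.mem_univ i) (by rw [restrictG, if_neg hi]), mul_zero]

lemma genericCoeff_ne_zero (hfin : PAhat A γ ≠ ⊤) {m : ℕ} (hm : m ∈ activeSet A γ) :
    genericCoeff A γ m ≠ 0 := by
  obtain ⟨σ₀, κ₀, hopt, rfl⟩ := exists_isOptimalTerm hfin hm
  -- `genericCoeff` does not vanish at the 0/1 point supported on the entries of `(σ₀, κ₀)`.
  set a : Fin (d + 1) → Matrix (Fin n) (Fin n) ℂ :=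
    fun k i j => if k = κ₀ i ∧ j = σ₀ i then 1 else 0
  have hmem : (σ₀, κ₀) ∈ Finset.univ ×ˢ Finset.univ.filter
      fun κ : Fin n → Fin (d + 1) => ∑ i, (κ i : ℕ) = ∑ i, (κ₀ i : ℕ) := by
    simp
  intro h0
  have hcoeff := eval_genericCoeff hfin (∑ i, (κ₀ i : ℕ)) a
  rw [h0, map_zero, auxPencil_eq_of, coeff_det_sum_C_mul_X_pow, ← Finset.sum_product',
    Finset.sum_eq_single_of_mem (σ₀, κ₀) hmem] at hcoeff
  · rw [Finset.prod_eq_one fun i _ => by simp [restrictG, a, hopt i], mul_one] at hcoeff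
    exact Int.cast_ne_zero.mpr (Units.ne_zero _) hcoeff.symm
  · rintro ⟨σ, κ⟩ - hne
    obtain ⟨i, hi⟩ : ∃ i, ¬(κ i = κ₀ i ∧ σ i = σ₀ i) := by
      by_contra! h
      exact hne (Prod.ext (Equiv.ext fun i => (h i).2) (funext fun i => (h i).1))
    rw [Finset.prod_eq_zero (Finset.mem_univ i) (by simp [restrictG, a, hi]), mul_zero]

end Generic

section Roots

open Polynomial

variable {K : Type*} [Field K] [IsAlgClosed K] [DecidableEq K]

lemma card_roots_filter_ne_zero (q : K[X]) :
    Multiset.card (q.roots.filter (· ≠ 0)) = q.natDegree - q.rootMultiplicity 0 := by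
  have hzero : Multiset.card (q.roots.filter fun x => ¬x ≠ 0) = q.rootMultiplicity 0 := by
    rw [← count_roots, Multiset.count_eq_card_filter_eq]
    simp only [ne_eq, not_not, eq_comm]
  have hsplit := congrArg Multiset.card (Multiset.filter_add_not (· ≠ 0) q.roots)
  rw [Multiset.card_add, hzero, IsAlgClosed.card_roots_eq_natDegree] at hsplit
  omega

lemma rootMultiplicity_zero_eq_and_card_roots_filter_ne_zero {q : K[X]} {lo hi : ℕ}
    (hlo : q.coeff lo ≠ 0) (hhi : q.coeff hi ≠ 0)
    (hsupp : ∀ m, q.coeff m ≠ 0 → lo ≤ m ∧ m ≤ hi) :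
    q.rootMultiplicity 0 = lo ∧ Multiset.card (q.roots.filter (· ≠ 0)) = hi - lo := by
  have hq : q ≠ 0 := fun h => hlo (by rw [h, coeff_zero])
  have hmult : q.rootMultiplicity 0 = lo := by
    rw [rootMultiplicity_eq_natTrailingDegree']
    refine le_antisymm (natTrailingDegree_le_of_ne_zero hlo)
      (le_natTrailingDegree hq fun m hm => ?_)
    by_contra h
    exact (hsupp m h).1.not_gt hm
  have hdeg : q.natDegree = hi := by
    refine natDegree_eq_of_le_of_coeff_ne_zero
      (natDegree_le_iff_coeff_eq_zero.mpr fun m hm => ?_) hhi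
    by_contra h
    exact (hsupp m h).2.not_gt hm
  exact ⟨hmult, by rw [card_roots_filter_ne_zero, hdeg, hmult]⟩

end Roots

section Slopes

variable {n d : ℕ} (A : Fin (d + 1) → Matrix (Fin n) (Fin n) Rmin)

def PAsupport : Finset ℕ := (Finset.range (n * d + 1)).filter fun m => PAcoeff A m ≠ ⊤

/-- `x ↦ P_m + m x`, junk for `m ∉ PAsupport A`; `P̂_A` is the minimum of these lines. -/
def PAline (m : ℕ) (x : ℝ) : ℝ := (PAcoeff A m).untop₀ + m * x

/-- The right derivative `P̂_A'(x⁺)`. -/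
def loSlope (x : ℝ) : ℕ := ((activeSet A x).min).getD 0

/-- The left derivative `P̂_A'(x⁻)`. -/
def hiSlope (x : ℝ) : ℕ := (activeSet A x).sup id

variable {A}

lemma PAline_sub_PAline (m m' : ℕ) (x z : ℝ) :
    PAline A m' z - PAline A m z = PAline A m' x - PAline A m x + (m' - m) * (z - x) := by
  simp only [PAline]
  ring

lemma mem_activeSet_iff {x : ℝ} {m : ℕ} :
    m ∈ activeSet A x ↔ m ∈ PAsupport A ∧ ∀ m' ∈ PAsupport A, PAline A m x ≤ PAline A m' x := by
  have hcoe : ∀ m ∈ PAsupport A,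
      PAcoeff A m + (((m : ℝ) * x : ℝ) : Rmin) = ((PAline A m x : ℝ) : Rmin) := fun m hm => by
    rw [PAline, WithTop.coe_add, WithTop.coe_untop₀_of_ne_top (Finset.mem_filter.mp hm).2]
  constructor
  · intro hm
    obtain ⟨hr, hne, heq⟩ := Finset.mem_filter.mp hm
    refine ⟨Finset.mem_filter.mpr ⟨hr, hne⟩, fun m' hm' => ?_⟩
    have hle : PAhat A x ≤ PAcoeff A m' + (((m' : ℝ) * x : ℝ) : Rmin) :=
      Finset.inf_le (Finset.mem_filter.mp hm').1
    rwa [← heq, hcoe m (Finset.mem_filter.mpr ⟨hr, hne⟩), hcoe m' hm', WithTop.coe_le_coe] at hle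
  · rintro ⟨hm, hmin⟩
    obtain ⟨hr, hne⟩ := Finset.mem_filter.mp hm
    refine Finset.mem_filter.mpr ⟨hr, hne, le_antisymm (Finset.le_inf fun m' hm'r => ?_)
      (Finset.inf_le hr)⟩
    by_cases hm' : PAcoeff A m' = ⊤
    · rw [hm', top_add]
      exact le_top
    have hm'S : m' ∈ PAsupport A := Finset.mem_filter.mpr ⟨hm'r, hm'⟩
    rw [hcoe m hm, hcoe m' hm'S, WithTop.coe_le_coe]
    exact hmin m' hm'S

lemma activeSet_nonempty (hS : (PAsupport A).Nonempty) (x : ℝ) : (activeSet A x).Nonempty := by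
  obtain ⟨m, hm, hmin⟩ := (PAsupport A).exists_min_image (PAline A · x) hS
  exact ⟨m, mem_activeSet_iff.mpr ⟨hm, hmin⟩⟩

lemma loSlope_mem {x : ℝ} (hx : (activeSet A x).Nonempty) : loSlope A x ∈ activeSet A x := by
  rw [loSlope, ← Finset.coe_min' hx]
  exact Finset.min'_mem _ hx

lemma loSlope_le {x : ℝ} {m : ℕ} (hm : m ∈ activeSet A x) : loSlope A x ≤ m := by
  rw [loSlope, ← Finset.coe_min' ⟨m, hm⟩]
  exact Finset.min'_le _ m hm

lemma hiSlope_mem {x : ℝ} (hx : (activeSet A x).Nonempty) : hiSlope A x ∈ activeSet A x := by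
  rw [hiSlope, ← Finset.sup'_eq_sup hx, ← Finset.max'_eq_sup']
  exact Finset.max'_mem _ hx

lemma le_hiSlope {x : ℝ} {m : ℕ} (hm : m ∈ activeSet A x) : m ≤ hiSlope A x :=
  Finset.le_sup (f := id) hm

lemma cornerMult_eq (x : ℝ) : cornerMult A x = hiSlope A x - loSlope A x := rfl

lemma le_of_mem_activeSet_of_lt {x y : ℝ} (hxy : x < y) {m m' : ℕ} (hm : m ∈ activeSet A x)
    (hm' : m' ∈ activeSet A y) : m' ≤ m := by
  rw [mem_activeSet_iff] at hm hm'
  have h1 := hm.2 m' hm'.1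
  have h2 := hm'.2 m hm.1
  have key := PAline_sub_PAline (A := A) m m' x y
  by_contra! hc
  have : (m : ℝ) < m' := by exact_mod_cast hc
  nlinarith

lemma PAval_mem_PAsupport (hS : (PAsupport A).Nonempty) : PAval A ∈ PAsupport A := by
  obtain ⟨m, hm⟩ := hS
  obtain ⟨hr, hne⟩ := Finset.mem_filter.mp hm
  refine Finset.mem_filter.mpr ⟨?_, Nat.sInf_mem (s := {m | PAcoeff A m ≠ ⊤}) ⟨m, hne⟩⟩
  exact Finset.mem_range.mpr ((Nat.sInf_le hne).trans_lt (Finset.mem_range.mp hr))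

lemma PAval_le {m : ℕ} (hm : m ∈ PAsupport A) : PAval A ≤ m :=
  Nat.sInf_le (Finset.mem_filter.mp hm).2

/-- The corner is the first crossing, to the right of `x`, of the line of slope `loSlope A x`
with a line of smaller slope. -/
lemma exists_isFiniteCorner_of_lt_loSlope {x : ℝ} (hx : (activeSet A x).Nonempty) {m : ℕ}
    (hm : m ∈ PAsupport A) (hlt : m < loSlope A x) :
    ∃ z, x < z ∧ IsFiniteCorner A z ∧ PAline A (loSlope A x) z ≤ PAline A m z := by
  set s := loSlope A x
  obtain ⟨hsS, hsmin⟩ := mem_activeSet_iff.mp (loSlope_mem hx)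
  set T := (PAsupport A).filter (· < s)
  have hlt_s : ∀ m' ∈ T, (m' : ℝ) < s := fun m' hm' => by
    exact_mod_cast (Finset.mem_filter.mp hm').2
  have hgap : ∀ m' ∈ T, PAline A s x < PAline A m' x := by
    intro m' hm'
    obtain ⟨hm'S, hm's⟩ := Finset.mem_filter.mp hm'
    by_contra! hle
    have hact : m' ∈ activeSet A x :=
      mem_activeSet_iff.mpr ⟨hm'S, fun m'' hm'' => hle.trans (hsmin m'' hm'')⟩
    exact (loSlope_le hact).not_gt hm's
  set cross : ℕ → ℝ := fun m' => x + (PAline A m' x - PAline A s x) / (s - m')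
  have hx_lt_cross : ∀ m' ∈ T, x < cross m' := fun m' hm' =>
    lt_add_of_pos_right x (div_pos (sub_pos.mpr (hgap m' hm')) (sub_pos.mpr (hlt_s m' hm')))
  have hdiff : ∀ m' ∈ T, ∀ z, PAline A m' z - PAline A s z = (s - m') * (cross m' - z) := by
    intro m' hm' z
    have : (s : ℝ) - m' ≠ 0 := (sub_pos.mpr (hlt_s m' hm')).ne'
    rw [PAline_sub_PAline s m' x z]
    simp only [cross]
    field_simp
    ring
  obtain ⟨m₀, hm₀, hmin⟩ := T.exists_min_image cross ⟨m, Finset.mem_filter.mpr ⟨hm, hlt⟩⟩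
  have hxz := hx_lt_cross m₀ hm₀
  have hbelow : ∀ m' ∈ PAsupport A, PAline A s (cross m₀) ≤ PAline A m' (cross m₀) := by
    intro m' hm'S
    by_cases hm's : m' < s
    · have hm'T : m' ∈ T := Finset.mem_filter.mpr ⟨hm'S, hm's⟩
      nlinarith [hdiff m' hm'T (cross m₀),
        mul_nonneg (sub_pos.mpr (hlt_s m' hm'T)).le (sub_nonneg.mpr (hmin m' hm'T))]
    · have hsm' : (s : ℝ) ≤ m' := by exact_mod_cast not_lt.mp hm's
      nlinarith [PAline_sub_PAline (A := A) s m' x (cross m₀), hsmin m' hm'S,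
        mul_nonneg (sub_nonneg.mpr hsm') (sub_nonneg.mpr hxz.le)]
  have hm₀z := hdiff m₀ hm₀ (cross m₀)
  rw [sub_self, mul_zero, sub_eq_zero] at hm₀z
  refine ⟨cross m₀, hxz, ⟨s, mem_activeSet_iff.mpr ⟨hsS, hbelow⟩, m₀,
    mem_activeSet_iff.mpr ⟨(Finset.mem_filter.mp hm₀).1, hm₀z ▸ hbelow⟩,
    (Finset.mem_filter.mp hm₀).2.ne'⟩, hbelow m hm⟩

end Slopes

section Corners

variable {n d : ℕ} {A : Fin (d + 1) → Matrix (Fin n) (Fin n) Rmin}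

lemma hiSlope_eq_loSlope_of_forall_not_isFiniteCorner (hS : (PAsupport A).Nonempty) {x y : ℝ}
    (hxy : x < y) (hnc : ∀ z, x < z → z < y → ¬IsFiniteCorner A z) :
    hiSlope A y = loSlope A x := by
  have hx := activeSet_nonempty hS x
  refine le_antisymm (le_of_mem_activeSet_of_lt hxy (loSlope_mem hx)
    (hiSlope_mem (activeSet_nonempty hS y))) (le_hiSlope ?_)
  obtain ⟨hsS, hsmin⟩ := mem_activeSet_iff.mp (loSlope_mem hx)
  by_contra hact
  obtain ⟨m, hmS, hm⟩ : ∃ m ∈ PAsupport A, PAline A m y < PAline A (loSlope A x) y := by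
    by_contra! h
    exact hact (mem_activeSet_iff.mpr ⟨hsS, h⟩)
  have key := PAline_sub_PAline (A := A) (loSlope A x) m x y
  have hms : m < loSlope A x := by
    by_contra! h
    have : (loSlope A x : ℝ) ≤ m := by exact_mod_cast h
    nlinarith [hsmin m hmS]
  obtain ⟨z, hxz, hz, hzm⟩ := exists_isFiniteCorner_of_lt_loSlope hx hmS hms
  refine hnc z hxz ?_ hz
  have key' := PAline_sub_PAline (A := A) (loSlope A x) m z y
  have : (m : ℝ) < loSlope A x := by exact_mod_cast hms
  nlinarith

lemma loSlope_eq_PAval_of_forall_not_isFiniteCorner (hS : (PAsupport A).Nonempty) {x : ℝ}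
    (hnc : ∀ z, x < z → ¬IsFiniteCorner A z) : loSlope A x = PAval A := by
  have hx := activeSet_nonempty hS x
  refine le_antisymm ?_ (PAval_le (mem_activeSet_iff.mp (loSlope_mem hx)).1)
  by_contra! h
  obtain ⟨z, hxz, hz, -⟩ := exists_isFiniteCorner_of_lt_loSlope hx (PAval_mem_PAsupport hS) h
  exact hnc z hxz hz

theorem loSlope_eq_PAval_add_sum_cornerMult (hS : (PAsupport A).Nonempty) (cs : Finset ℝ) :
    ∀ x, (∀ z, z ∈ cs ↔ x < z ∧ IsFiniteCorner A z) →
      loSlope A x = PAval A + ∑ z ∈ cs, cornerMult A z := by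
  induction cs using Finset.induction_on_min with
  | empty =>
    intro x hcs
    rw [Finset.sum_empty, add_zero]
    exact loSlope_eq_PAval_of_forall_not_isFiniteCorner hS fun z hz hc =>
      Finset.notMem_empty z ((hcs z).mpr ⟨hz, hc⟩)
  | insert a cs ha ih =>
    intro x hcs
    have hxa := ((hcs a).mp (Finset.mem_insert_self a cs)).1
    have hcs' : ∀ z, z ∈ cs ↔ a < z ∧ IsFiniteCorner A z := fun z =>
      ⟨fun hz => ⟨ha z hz, ((hcs z).mp (Finset.mem_insert_of_mem hz)).2⟩, fun ⟨haz, hz⟩ =>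
        ((Finset.mem_insert.mp ((hcs z).mpr ⟨hxa.trans haz, hz⟩)).resolve_left haz.ne')⟩
    have hnc : ∀ z, x < z → z < a → ¬IsFiniteCorner A z := fun z hxz hza hz =>
      (Finset.mem_insert.mp ((hcs z).mpr ⟨hxz, hz⟩)).elim hza.ne (fun h => (ha z h).not_gt hza)
    have hle := loSlope_le (hiSlope_mem (activeSet_nonempty hS a))
    have hih := ih a hcs'
    rw [Finset.sum_insert fun h => (ha a h).false, cornerMult_eq,
      ← hiSlope_eq_loSlope_of_forall_not_isFiniteCorner hS hxa hnc]
    omega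

end Corners

/-- **Theorem 1 (genericity of the multiplicities at a corner).**
Fix exponent matrices `A_0, …, A_d` and a finite corner `γ` of `P_A` of multiplicity `μ`.
Let `ν` be the sum of the multiplicities of the finite corners of `P_A` strictly greater
than `γ`, plus the valuation of `P_A` (the multiplicity of the corner `𝟘 = +∞`).  Then
there is a nonzero polynomial `Φ` with complex coefficients in the variables
`{(a_k)_{ij} : (A_k)_{ij} < +∞}` such that whenever `Φ((a_k)_{ij}) ≠ 0`, the auxiliary
pencil `a^{(γ)}` built with the graphs `G_k = Opt_k(γ)` satisfies: `det a^{(γ)}` has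
exactly `μ` nonzero roots (with multiplicity) and `0` is a root of `det a^{(γ)}` of
multiplicity exactly `ν`. -/
theorem genericity_at_corner
    (n d : ℕ) (hn : 1 ≤ n)
    (A : Fin (d + 1) → Matrix (Fin n) (Fin n) Rmin)
    (γ : ℝ) (hγ : IsFiniteCorner A γ)
    (μ : ℕ) (hμ : μ = cornerMult A γ)
    (cs : Finset ℝ) (hcs : ∀ x : ℝ, x ∈ cs ↔ γ < x ∧ IsFiniteCorner A x)
    (ν : ℕ) (hν : ν = (∑ x ∈ cs, cornerMult A x) + PAval A) :
    ∃ Φ : MvPolynomial {p : Fin (d + 1) × Fin n × Fin n // A p.1 p.2.1 p.2.2 ≠ ⊤} ℂ,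
      Φ ≠ 0 ∧
      ∀ a : Fin (d + 1) → Matrix (Fin n) (Fin n) ℂ,
        MvPolynomial.eval (fun p => a p.1.1 p.1.2.1 p.1.2.2) Φ ≠ 0 →
          (auxPencil a (OptK A γ)).det ≠ 0 ∧
          Multiset.card ((auxPencil a (OptK A γ)).det.roots.filter (· ≠ 0)) = μ ∧
          (auxPencil a (OptK A γ)).det.rootMultiplicity 0 = ν := by
  obtain ⟨m, hm, -⟩ := hγ
  obtain ⟨hmS, -⟩ := mem_activeSet_iff.mp hm
  have hfin : PAhat A γ ≠ ⊤ := by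
    obtain ⟨-, hne, heq⟩ := Finset.mem_filter.mp hm
    exact heq ▸ WithTop.add_ne_top.mpr ⟨hne, WithTop.coe_ne_top⟩
  have hlo := loSlope_mem ⟨m, hm⟩
  have hhi := hiSlope_mem ⟨m, hm⟩
  refine ⟨genericCoeff A γ (loSlope A γ) * genericCoeff A γ (hiSlope A γ),
    mul_ne_zero (genericCoeff_ne_zero hfin hlo) (genericCoeff_ne_zero hfin hhi), fun a ha => ?_⟩
  rw [map_mul, eval_genericCoeff hfin, eval_genericCoeff hfin] at ha
  obtain ⟨hclo, hchi⟩ := mul_ne_zero_iff.mp ha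
  have hsupp : ∀ m', (auxPencil a (OptK A γ)).det.coeff m' ≠ 0 →
      loSlope A γ ≤ m' ∧ m' ≤ hiSlope A γ := fun m' hm' => by
    have hact := not_imp_comm.mp (coeff_det_auxPencil_eq_zero hn hfin (a := a)) hm'
    exact ⟨loSlope_le hact, le_hiSlope hact⟩
  obtain ⟨hmult, hcard⟩ := rootMultiplicity_zero_eq_and_card_roots_filter_ne_zero hclo hchi hsupp
  refine ⟨fun h => hchi (by rw [h, Polynomial.coeff_zero]), by rw [hcard, hμ, cornerMult_eq], ?_⟩
  rw [hmult, hν, loSlope_eq_PAval_add_sum_cornerMult ⟨m, hmS⟩ cs γ hcs, add_comm]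
end
end

section
/- Fix exponent matrices A_0, …, A_d ∈ (ℝ ∪ {+∞})^{n×n}. There exists a nonzero polynomial Φ, with complex coefficients, in the family of variables { (a_k)_{ij} : 0 ≤ k ≤ d, (A_k)_{ij} < +∞ }, such that whenever the leading-coefficient matrices a_0, …, a_d ∈ ℂ^{n×n} satisfy Φ((a_k)_{ij}) ≠ 0, and 𝒜_ε is any perturbed pencil with the asymptotics given by (a_k, A_k), there exists ε₀ > 0 such that for every ε ∈ (0, ε₀): (a) the degree of the polynomial det(𝒜_ε) ∈ ℂ[X] equals the degree of P_A (the largest k whose coefficient in P_A is ≠ 𝟘); and (b) the multiplicity of 0 as a root of det(𝒜_ε) equals the valuation of P_A (the smallest k whose coefficient in P_A is ≠ 𝟘). In particular, generically, the sum of the multiplicities of all corners of P_A equals the degree of det(𝒜_ε), and the number of identically zero eigenvalues of 𝒜_ε equals the multiplicity of the corner 𝟘 of P_A. -/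
open Polynomial Filter Topology Finset

noncomputable section

/-!
Expanding the determinant, the coefficient of `X^m` in `det 𝒜_ε` is a signed sum over pairs
`(σ, κ)` (a permutation and a choice of exponents with `Σ κ i = m`) of products of entries, and
by the asymptotic hypothesis each product is `(∏ a) ε^w + o(ε^w)`, where `w` is the min-plus
weight of the pair. Hence the coefficient, divided by `ε^{P_m}`, tends to the signed sum `L_m(a)`
over the pairs of minimal weight, and it vanishes near `0` when `P_m = 𝟘`. As a polynomial in the
entries of `a`, `L_m` is nonzero because distinct pairs give distinct monomials, so
`Φ = L_{deg P_A} · L_{val P_A}` forces the extreme coefficients of `det 𝒜_ε` to be nonzero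
for small `ε` while all coefficients outside that range vanish.
-/

section PermanentExpansion

variable {n d : ℕ}

def termsOfDegree (n d m : ℕ) : Finset (Equiv.Perm (Fin n) × (Fin n → Fin (d + 1))) :=
  univ ×ˢ univ.filter fun κ => ∑ i, (κ i : ℕ) = m

def termWeight (A : Fin (d + 1) → Matrix (Fin n) (Fin n) Rmin)
    (τ : Equiv.Perm (Fin n) × (Fin n → Fin (d + 1))) : Rmin :=
  ∑ i, A (τ.2 i) i (τ.1 i)

def pencilTerm {R : Type*} [CommRing R] (x : Fin (d + 1) → Matrix (Fin n) (Fin n) R)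
    (τ : Equiv.Perm (Fin n) × (Fin n → Fin (d + 1))) : R :=
  Equiv.Perm.sign τ.1 • ∏ i, x (τ.2 i) i (τ.1 i)

def pencilMatrix {R : Type*} [CommRing R] (M : Fin (d + 1) → Matrix (Fin n) (Fin n) R) :
    Matrix (Fin n) (Fin n) R[X] :=
  Matrix.of fun i j => ∑ k : Fin (d + 1), C (M k i j) * X ^ (k : ℕ)

theorem pencilPoly_eq_det (𝒜 : ℝ → Fin (d + 1) → Matrix (Fin n) (Fin n) ℂ) (ε : ℝ) :
    pencilPoly 𝒜 ε = (pencilMatrix (𝒜 ε)).det :=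
  rfl

theorem coeff_det_pencilMatrix {R : Type*} [CommRing R]
    (M : Fin (d + 1) → Matrix (Fin n) (Fin n) R) (m : ℕ) :
    (pencilMatrix M).det.coeff m = ∑ τ ∈ termsOfDegree n d m, pencilTerm M τ := by
  rw [← Matrix.det_transpose, Matrix.det_apply, finsetSum_coeff, termsOfDegree, Finset.sum_product]
  refine Finset.sum_congr rfl fun σ _ => ?_
  have hprod : ∏ i, (pencilMatrix M).transpose (σ i) i =
      ∑ κ : Fin n → Fin (d + 1), C (∏ i, M (κ i) i (σ i)) * X ^ ∑ i, (κ i : ℕ) := by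
    simp only [Matrix.transpose_apply, pencilMatrix, Matrix.of_apply]
    rw [Finset.prod_univ_sum, Fintype.piFinset_univ]
    refine Finset.sum_congr rfl fun κ _ => ?_
    rw [Finset.prod_mul_distrib, Finset.prod_pow_eq_pow_sum, ← map_prod]
  rw [hprod, Finset.smul_sum, finsetSum_coeff, Finset.sum_filter]
  refine Finset.sum_congr rfl fun κ _ => ?_
  rw [coeff_smul, coeff_C_mul, coeff_X_pow, pencilTerm]
  simp only [eq_comm, smul_ite, smul_zero, mul_ite, mul_one, mul_zero, Units.smul_def]

variable (A : Fin (d + 1) → Matrix (Fin n) (Fin n) Rmin)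

theorem PAcoeff_eq_inf (m : ℕ) : PAcoeff A m = (termsOfDegree n d m).inf (termWeight A) := by
  rw [termsOfDegree, Finset.inf_product_left]
  rfl

theorem PAcoeff_le_termWeight {m : ℕ} {τ : Equiv.Perm (Fin n) × (Fin n → Fin (d + 1))}
    (hτ : τ ∈ termsOfDegree n d m) : PAcoeff A m ≤ termWeight A τ :=
  PAcoeff_eq_inf A m ▸ Finset.inf_le hτ

theorem exists_termWeight_eq_PAcoeff {m : ℕ} (hm : PAcoeff A m ≠ ⊤) :
    ∃ τ ∈ termsOfDegree n d m, termWeight A τ = PAcoeff A m := by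
  rw [PAcoeff_eq_inf] at hm ⊢
  have hne : (termsOfDegree n d m).Nonempty :=
    Finset.nonempty_iff_ne_empty.2 fun h => hm (by rw [h]; rfl)
  obtain ⟨τ, hτ, h⟩ := Finset.exists_mem_eq_inf _ hne (termWeight A)
  exact ⟨τ, hτ, h.symm⟩

theorem termsOfDegree_eq_empty {m : ℕ} (hm : n * d < m) : termsOfDegree n d m = ∅ := by
  refine Finset.product_eq_empty.2 (Or.inr (Finset.filter_eq_empty_iff.2 fun κ _ hκ => ?_))
  have : ∑ i, (κ i : ℕ) ≤ n * d := by
    simpa using Finset.sum_le_sum fun i (_ : i ∈ univ) => Fin.is_le (κ i)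
  omega

theorem PAcoeff_eq_top_of_lt {m : ℕ} (hm : n * d < m) : PAcoeff A m = ⊤ := by
  rw [PAcoeff_eq_inf, termsOfDegree_eq_empty hm, Finset.inf_empty]

theorem entry_ne_top_of_termWeight_ne_top {τ : Equiv.Perm (Fin n) × (Fin n → Fin (d + 1))}
    (h : termWeight A τ ≠ ⊤) (i : Fin n) : A (τ.2 i) i (τ.1 i) ≠ ⊤ := by
  contrapose! h
  exact WithTop.sum_eq_top.2 ⟨i, mem_univ i, h⟩

theorem bddAbove_PAcoeff_ne_top : BddAbove {m | PAcoeff A m ≠ ⊤} :=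
  ⟨n * d, fun _ hm => not_lt.1 fun h => hm (PAcoeff_eq_top_of_lt A h)⟩

theorem PAcoeff_PAdeg_ne_top (h : ∃ m, PAcoeff A m ≠ ⊤) : PAcoeff A (PAdeg A) ≠ ⊤ :=
  Nat.sSup_mem h (bddAbove_PAcoeff_ne_top A)

theorem PAcoeff_eq_top_of_PAdeg_lt {m : ℕ} (hm : PAdeg A < m) : PAcoeff A m = ⊤ :=
  not_not.1 fun h => hm.not_ge (le_csSup (bddAbove_PAcoeff_ne_top A) h)

theorem PAcoeff_PAval_ne_top (h : ∃ m, PAcoeff A m ≠ ⊤) : PAcoeff A (PAval A) ≠ ⊤ :=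
  Nat.sInf_mem h

theorem PAcoeff_eq_top_of_lt_PAval {m : ℕ} (hm : m < PAval A) : PAcoeff A m = ⊤ :=
  not_not.1 (Nat.notMem_of_lt_sInf hm)

end PermanentExpansion

section LeadingCoefficient

variable {n d : ℕ} (A : Fin (d + 1) → Matrix (Fin n) (Fin n) Rmin)

def optimalTerms (m : ℕ) : Finset (Equiv.Perm (Fin n) × (Fin n → Fin (d + 1))) :=
  (termsOfDegree n d m).filter fun τ => termWeight A τ = PAcoeff A m

def leadCoef {R : Type*} [CommRing R] (x : Fin (d + 1) → Matrix (Fin n) (Fin n) R) (m : ℕ) : R :=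
  ∑ τ ∈ optimalTerms A m, pencilTerm x τ

theorem map_leadCoef {R S : Type*} [CommRing R] [CommRing S] (f : R →+* S)
    (x : Fin (d + 1) → Matrix (Fin n) (Fin n) R) (m : ℕ) :
    f (leadCoef A x m) = leadCoef A (fun k i j => f (x k i j)) m := by
  simp only [leadCoef, pencilTerm, map_sum, map_zsmul_unit, map_prod]

theorem leadCoef_congr {R : Type*} [CommRing R] {x y : Fin (d + 1) → Matrix (Fin n) (Fin n) R}
    {m : ℕ} (hm : PAcoeff A m ≠ ⊤) (h : ∀ k i j, A k i j ≠ ⊤ → x k i j = y k i j) :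
    leadCoef A x m = leadCoef A y m := by
  refine Finset.sum_congr rfl fun τ hτ => ?_
  have hτ : termWeight A τ ≠ ⊤ := (Finset.mem_filter.1 hτ).2 ▸ hm
  simp only [pencilTerm, fun i => h _ _ _ (entry_ne_top_of_termWeight_ne_top A hτ i)]

def termIndicator {R : Type*} [CommRing R] (τ₀ : Equiv.Perm (Fin n) × (Fin n → Fin (d + 1))) :
    Fin (d + 1) → Matrix (Fin n) (Fin n) R :=
  fun k i j => if k = τ₀.2 i ∧ j = τ₀.1 i then 1 else 0

theorem pencilTerm_termIndicator {R : Type*} [CommRing R]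
    (τ τ₀ : Equiv.Perm (Fin n) × (Fin n → Fin (d + 1))) :
    pencilTerm (termIndicator τ₀ : Fin (d + 1) → Matrix (Fin n) (Fin n) R) τ =
      if τ = τ₀ then Equiv.Perm.sign τ₀.1 • 1 else 0 := by
  have hgraph : (∀ i ∈ univ, τ.2 i = τ₀.2 i ∧ τ.1 i = τ₀.1 i) ↔ τ = τ₀ := by
    simp only [Prod.ext_iff, funext_iff, Equiv.ext_iff, mem_univ, true_implies, forall_and,
      and_comm]
  simp only [pencilTerm, termIndicator, Finset.prod_boole, hgraph]
  split_ifs with h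
  · rw [h]
  · exact smul_zero _

def entryVar (k : Fin (d + 1)) (i j : Fin n) :
    MvPolynomial {p : Fin (d + 1) × Fin n × Fin n // A p.1 p.2.1 p.2.2 ≠ ⊤} ℂ :=
  if h : A k i j ≠ ⊤ then MvPolynomial.X ⟨(k, i, j), h⟩ else 0

def leadPoly (m : ℕ) : MvPolynomial {p : Fin (d + 1) × Fin n × Fin n // A p.1 p.2.1 p.2.2 ≠ ⊤} ℂ :=
  leadCoef A (entryVar A) m

theorem eval_leadPoly {m : ℕ} (hm : PAcoeff A m ≠ ⊤) (a : Fin (d + 1) → Matrix (Fin n) (Fin n) ℂ) :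
    MvPolynomial.eval (fun p => a p.1.1 p.1.2.1 p.1.2.2) (leadPoly A m) = leadCoef A a m := by
  refine (map_leadCoef A _ _ _).trans (leadCoef_congr A hm fun k i j h => ?_)
  rw [entryVar, dif_pos h, MvPolynomial.eval_X]

theorem leadPoly_ne_zero {m : ℕ} (hm : PAcoeff A m ≠ ⊤) : leadPoly A m ≠ 0 := by
  obtain ⟨τ₀, hτ₀, hopt⟩ := exists_termWeight_eq_PAcoeff A hm
  have hτ₀ : τ₀ ∈ optimalTerms A m := Finset.mem_filter.2 ⟨hτ₀, hopt⟩
  -- at the indicator of the entries used by `τ₀`, every other term of `leadPoly` vanishes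
  have heval := eval_leadPoly A hm (termIndicator τ₀)
  simp only [leadCoef, pencilTerm_termIndicator, Finset.sum_ite_eq', if_pos hτ₀, Units.smul_def,
    zsmul_one] at heval
  intro h
  rw [h, map_zero, eq_comm, Int.cast_eq_zero] at heval
  exact (Equiv.Perm.sign τ₀.1).ne_zero heval

end LeadingCoefficient

section Asymptotics

open Asymptotics

theorem tendsto_div_of_isLittleO {α : Type*} {l : Filter α} {f : α → ℂ} {g : α → ℝ} {c : ℂ}
    (hg : ∀ᶠ x in l, g x ≠ 0) (h : (fun x => f x - c * g x) =o[l] g) :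
    Tendsto (fun x => f x / g x) l (𝓝 c) := by
  rw [← tendsto_sub_nhds_zero_iff]
  refine (Complex.isLittleO_ofReal_right.2 h).tendsto_div_nhds_zero.congr' ?_
  filter_upwards [hg] with x hx
  have : (g x : ℂ) ≠ 0 := Complex.ofReal_ne_zero.2 hx
  field_simp

theorem tendsto_rpow_nhdsGT_zero {s : ℝ} (hs : 0 < s) :
    Tendsto (fun ε : ℝ => ε ^ s) (𝓝[>] 0) (𝓝 0) := by
  have := (Real.continuousAt_rpow_const 0 s (Or.inr hs.le)).tendsto
  rw [Real.zero_rpow hs.ne'] at this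
  exact tendsto_nhdsWithin_of_tendsto_nhds this

variable {n d : ℕ} {A : Fin (d + 1) → Matrix (Fin n) (Fin n) Rmin}
  {a : Fin (d + 1) → Matrix (Fin n) (Fin n) ℂ} {𝒜 : ℝ → Fin (d + 1) → Matrix (Fin n) (Fin n) ℂ}

theorem HasAsymptotics.tendsto_div_rpow (hA : HasAsymptotics 𝒜 a A) {k : Fin (d + 1)}
    {i j : Fin n} {t : ℝ} (h : A k i j = t) :
    Tendsto (fun ε => 𝒜 ε k i j / (ε ^ t : ℝ)) (𝓝[>] 0) (𝓝 (a k i j)) :=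
  tendsto_div_of_isLittleO (eventually_nhdsWithin_of_forall fun _ hε =>
    (Real.rpow_pos_of_pos hε t).ne') ((hA k i j).2 t h)

theorem HasAsymptotics.tendsto_pencilTerm_div_rpow (hA : HasAsymptotics 𝒜 a A)
    {τ : Equiv.Perm (Fin n) × (Fin n → Fin (d + 1))} {t : ℝ} (h : termWeight A τ = t) :
    Tendsto (fun ε => pencilTerm (𝒜 ε) τ / (ε ^ t : ℝ)) (𝓝[>] 0) (𝓝 (pencilTerm a τ)) := by
  have hfin := entry_ne_top_of_termWeight_ne_top A (h ▸ WithTop.coe_ne_top)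
  choose s hs using fun i => WithTop.ne_top_iff_exists.1 (hfin i)
  have hsum : ∑ i, s i = t := by
    rw [← WithTop.coe_eq_coe, WithTop.coe_sum, ← h, termWeight]
    exact Finset.sum_congr rfl fun i _ => hs i
  have hprod := tendsto_finsetProd univ fun i _ => hA.tendsto_div_rpow (hs i).symm
  refine (hprod.const_smul (Equiv.Perm.sign τ.1)).congr' ?_
  filter_upwards [self_mem_nhdsWithin] with ε hε
  rw [pencilTerm, smul_div_assoc, ← hsum, Real.rpow_sum_of_pos hε, Complex.ofReal_prod,
    Finset.prod_div_distrib]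

theorem HasAsymptotics.eventually_pencilTerm_eq_zero (hA : HasAsymptotics 𝒜 a A) :
    ∀ᶠ ε in 𝓝[>] 0, ∀ τ, termWeight A τ = ⊤ → pencilTerm (𝒜 ε) τ = 0 := by
  refine Filter.eventually_all.2 fun τ => ?_
  by_cases h : termWeight A τ = ⊤
  · obtain ⟨i, -, hi⟩ := WithTop.sum_eq_top.1 h
    filter_upwards [(hA _ _ _).1 hi] with ε hε _
    rw [pencilTerm, Finset.prod_eq_zero (mem_univ i) hε, smul_zero]
  · exact Eventually.of_forall fun _ h' => absurd h' h

theorem HasAsymptotics.tendsto_pencilTerm_div_rpow_of_le (hA : HasAsymptotics 𝒜 a A)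
    {τ : Equiv.Perm (Fin n) × (Fin n → Fin (d + 1))} {c : ℝ} (hc : (c : Rmin) ≤ termWeight A τ) :
    Tendsto (fun ε => pencilTerm (𝒜 ε) τ / (ε ^ c : ℝ)) (𝓝[>] 0)
      (𝓝 (if termWeight A τ = c then pencilTerm a τ else 0)) := by
  split_ifs with hτ
  · exact hA.tendsto_pencilTerm_div_rpow hτ
  cases h : termWeight A τ using WithTop.recTopCoe with
  | top =>
    refine tendsto_const_nhds.congr' ?_
    filter_upwards [hA.eventually_pencilTerm_eq_zero] with ε hε
    rw [hε τ h, zero_div]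
  | coe t =>
    have hct : c < t := lt_of_le_of_ne (WithTop.coe_le_coe.1 (h ▸ hc)) fun e => hτ (e ▸ h)
    have hpow : Tendsto (fun ε : ℝ => ((ε ^ (t - c) : ℝ) : ℂ)) (𝓝[>] 0) (𝓝 0) := by
      rw [← Complex.ofReal_zero]
      exact (Complex.continuous_ofReal.tendsto 0).comp (tendsto_rpow_nhdsGT_zero (sub_pos.2 hct))
    have := (hA.tendsto_pencilTerm_div_rpow h).mul hpow
    rw [mul_zero] at this
    refine this.congr' ?_
    filter_upwards [self_mem_nhdsWithin] with ε (hε : 0 < ε)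
    have hεc : ((ε ^ c : ℝ) : ℂ) ≠ 0 := Complex.ofReal_ne_zero.2 (Real.rpow_pos_of_pos hε c).ne'
    have hεt : ((ε ^ t : ℝ) : ℂ) ≠ 0 := Complex.ofReal_ne_zero.2 (Real.rpow_pos_of_pos hε t).ne'
    rw [Real.rpow_sub hε, Complex.ofReal_div]
    field_simp

theorem HasAsymptotics.tendsto_coeff_div_rpow (hA : HasAsymptotics 𝒜 a A) {m : ℕ} {c : ℝ}
    (hc : PAcoeff A m = c) :
    Tendsto (fun ε => (pencilPoly 𝒜 ε).coeff m / (ε ^ c : ℝ)) (𝓝[>] 0) (𝓝 (leadCoef A a m)) := by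
  simp only [pencilPoly_eq_det, coeff_det_pencilMatrix, Finset.sum_div, leadCoef, optimalTerms,
    Finset.sum_filter, hc]
  exact tendsto_finsetSum _ fun τ hτ =>
    hA.tendsto_pencilTerm_div_rpow_of_le (hc ▸ PAcoeff_le_termWeight A hτ)

theorem HasAsymptotics.eventually_coeff_ne_zero (hA : HasAsymptotics 𝒜 a A) {m : ℕ}
    (hm : PAcoeff A m ≠ ⊤) (ha : leadCoef A a m ≠ 0) :
    ∀ᶠ ε in 𝓝[>] 0, (pencilPoly 𝒜 ε).coeff m ≠ 0 := by
  obtain ⟨c, hc⟩ := WithTop.ne_top_iff_exists.1 hm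
  filter_upwards [(hA.tendsto_coeff_div_rpow hc.symm).eventually_ne ha] with ε hε h
  rw [h, zero_div] at hε
  exact hε rfl

theorem HasAsymptotics.eventually_coeff_eq_zero (hA : HasAsymptotics 𝒜 a A) :
    ∀ᶠ ε in 𝓝[>] 0, ∀ m, PAcoeff A m = ⊤ → (pencilPoly 𝒜 ε).coeff m = 0 := by
  filter_upwards [hA.eventually_pencilTerm_eq_zero] with ε hε m hm
  rw [pencilPoly_eq_det, coeff_det_pencilMatrix]
  exact Finset.sum_eq_zero fun τ hτ => hε τ (top_le_iff.1 (hm ▸ PAcoeff_le_termWeight A hτ))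

end Asymptotics

theorem Polynomial.natDegree_eq_of_coeff_ne_zero {R : Type*} [Semiring R] {p : R[X]} {N : ℕ}
    (hN : p.coeff N ≠ 0) (h : ∀ m, N < m → p.coeff m = 0) : p.natDegree = N :=
  natDegree_eq_of_le_of_coeff_ne_zero (natDegree_le_iff_coeff_eq_zero.2 h) hN

theorem Polynomial.rootMultiplicity_zero_eq_of_coeff_ne_zero {R : Type*} [CommRing R] {p : R[X]}
    {N : ℕ} (hN : p.coeff N ≠ 0) (h : ∀ m < N, p.coeff m = 0) : p.rootMultiplicity 0 = N := by
  have hp : p ≠ 0 := fun hp => hN (by rw [hp, coeff_zero])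
  rw [rootMultiplicity_eq_natTrailingDegree']
  exact le_antisymm (natTrailingDegree_le_of_ne_zero hN) (le_natTrailingDegree hp h)

theorem generic_degree_and_valuation_general
    (n d : ℕ)
    (A : Fin (d + 1) → Matrix (Fin n) (Fin n) Rmin)
    (hPA : ∃ m : ℕ, PAcoeff A m ≠ ⊤) :
    ∃ Φ : MvPolynomial {p : Fin (d + 1) × Fin n × Fin n // A p.1 p.2.1 p.2.2 ≠ ⊤} ℂ,
      Φ ≠ 0 ∧
      ∀ a : Fin (d + 1) → Matrix (Fin n) (Fin n) ℂ,
        MvPolynomial.eval (fun p => a p.1.1 p.1.2.1 p.1.2.2) Φ ≠ 0 →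
          ∀ 𝒜 : ℝ → Fin (d + 1) → Matrix (Fin n) (Fin n) ℂ,
            (∀ k i j, ContinuousOn (fun ε : ℝ => 𝒜 ε k i j) (Set.Ioi 0)) →
            HasAsymptotics 𝒜 a A →
            ∃ ε₀ > (0 : ℝ), ∀ ε ∈ Set.Ioo (0 : ℝ) ε₀,
              pencilPoly 𝒜 ε ≠ 0 ∧
              (pencilPoly 𝒜 ε).natDegree = PAdeg A ∧
              (pencilPoly 𝒜 ε).rootMultiplicity 0 = PAval A := by
  have hdeg := PAcoeff_PAdeg_ne_top A hPA
  have hval := PAcoeff_PAval_ne_top A hPA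
  refine ⟨leadPoly A (PAdeg A) * leadPoly A (PAval A),
    mul_ne_zero (leadPoly_ne_zero A hdeg) (leadPoly_ne_zero A hval), fun a ha 𝒜 _ hA => ?_⟩
  rw [map_mul, eval_leadPoly A hdeg, eval_leadPoly A hval] at ha
  have hgood := (hA.eventually_coeff_ne_zero hdeg (left_ne_zero_of_mul ha)).and
    ((hA.eventually_coeff_ne_zero hval (right_ne_zero_of_mul ha)).and hA.eventually_coeff_eq_zero)
  obtain ⟨ε₀, hε₀, hsub⟩ := mem_nhdsGT_iff_exists_Ioo_subset.1 hgood
  refine ⟨ε₀, hε₀, fun ε hε => ?_⟩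
  obtain ⟨hdeg_ne, hval_ne, hzero⟩ := hsub hε
  exact ⟨fun h => hdeg_ne (by rw [h, coeff_zero]),
    natDegree_eq_of_coeff_ne_zero hdeg_ne fun m hm => hzero m (PAcoeff_eq_top_of_PAdeg_lt A hm),
    rootMultiplicity_zero_eq_of_coeff_ne_zero hval_ne fun m hm =>
      hzero m (PAcoeff_eq_top_of_lt_PAval A hm)⟩

/-- **Generic degree and valuation of `det 𝒜_ε`.**
Fix exponent matrices `A_0, …, A_d` (with `P_A` not identically `𝟘`).  There is a nonzero
polynomial `Φ` with complex coefficients in the variables `{(a_k)_{ij} : (A_k)_{ij} < +∞}`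
such that whenever `Φ((a_k)_{ij}) ≠ 0` and `𝒜_ε` is any perturbed pencil with the
asymptotics given by `(a_k, A_k)`, for all sufficiently small `ε > 0`:
(a) the degree of `det 𝒜_ε ∈ ℂ[X]` equals the degree of `P_A`; and
(b) the multiplicity of `0` as a root of `det 𝒜_ε` equals the valuation of `P_A`.
Hence, generically, the sum of the multiplicities of all corners of `P_A` equals the
degree of `det 𝒜_ε` and the number of identically zero eigenvalues of `𝒜_ε` equals the
multiplicity of the corner `𝟘` of `P_A`. -/
theorem generic_degree_and_valuation
    (n d : ℕ) (hn : 1 ≤ n)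
    (A : Fin (d + 1) → Matrix (Fin n) (Fin n) Rmin)
    (hPA : ∃ m : ℕ, PAcoeff A m ≠ ⊤) :
    ∃ Φ : MvPolynomial {p : Fin (d + 1) × Fin n × Fin n // A p.1 p.2.1 p.2.2 ≠ ⊤} ℂ,
      Φ ≠ 0 ∧
      ∀ a : Fin (d + 1) → Matrix (Fin n) (Fin n) ℂ,
        MvPolynomial.eval (fun p => a p.1.1 p.1.2.1 p.1.2.2) Φ ≠ 0 →
          ∀ 𝒜 : ℝ → Fin (d + 1) → Matrix (Fin n) (Fin n) ℂ,
            (∀ k i j, ContinuousOn (fun ε : ℝ => 𝒜 ε k i j) (Set.Ioi 0)) →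
            HasAsymptotics 𝒜 a A →
            ∃ ε₀ > (0 : ℝ), ∀ ε ∈ Set.Ioo (0 : ℝ) ε₀,
              pencilPoly 𝒜 ε ≠ 0 ∧
              (pencilPoly 𝒜 ε).natDegree = PAdeg A ∧
              (pencilPoly 𝒜 ε).rootMultiplicity 0 = PAval A :=
  generic_degree_and_valuation_general n d A hPA
end
end

section
/- Let B ∈ (ℝ ∪ {+∞})^{n×n} be a matrix with perm B ≠ +∞, i.e., there exists a permutation σ of {1,…,n} with Σ_{i=1}^n B_{iσ(i)} < +∞. Then there exists a Hungarian pair with respect to B: vectors U, V ∈ ℝ^n such that B_{ij} ≥ U_i + V_j for all i, j, and U_1 + ⋯ + U_n + V_1 + ⋯ + V_n = perm B = min_σ Σ_{i=1}^n B_{iσ(i)}. -/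
/-!
Replacing every `+∞` entry by a large enough real number changes neither the optimal value nor the
inequalities to be proved, so it suffices to treat a real matrix `A` with an optimal permutation
`σ`. The reduced costs `c i k = A i (σ k) - A k (σ k)` then have no negative cycle, because
rerouting `σ` along a cycle gives another permutation. Hence the costs `d` of shortest simple paths
satisfy `d i ≤ c i k + d k`, and `U = d`, `V (σ k) = A k (σ k) - d k` is a Hungarian pair.
-/

open Finset

noncomputable section

open Equiv

variable {ι : Type*}

section PathCost

variable {M : Type*} [AddCommMonoid M]

def pathCost (c : ι → ι → M) : ι → List ι → M
  | _, [] => 0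
  | x, y :: t => c x y + pathCost c y t

theorem pathCost_append_cons (c : ι → ι → M) (x i : ι) (s t : List ι) :
    pathCost c x (s ++ i :: t) = pathCost c x (s ++ [i]) + pathCost c i t := by
  induction s generalizing x with
  | nil => simp [pathCost]
  | cons y s ih => simp [pathCost, ih, add_assoc]

end PathCost

section ShortestPath

variable [Fintype ι] [DecidableEq ι] {M : Type*} [AddCommMonoid M] [LinearOrder M]

def simplePathTails (k : ι) : Finset (List ι) :=
  (univ.map (Function.Embedding.subtype List.Nodup)).filter fun t => (k :: t).Nodup

theorem mem_simplePathTails {k : ι} {t : List ι} : t ∈ simplePathTails k ↔ (k :: t).Nodup := by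
  simp only [simplePathTails, mem_filter, mem_map, mem_univ, true_and,
    Function.Embedding.subtype_apply]
  exact ⟨And.right, fun h => ⟨⟨⟨t, h.of_cons⟩, rfl⟩, h⟩⟩

def shortestSimplePathCost (c : ι → ι → M) (k : ι) : M :=
  (simplePathTails k).inf' ⟨[], mem_simplePathTails.2 (List.nodup_singleton k)⟩ (pathCost c k)

theorem shortestSimplePathCost_le (c : ι → ι → M) {k : ι} {t : List ι} (h : (k :: t).Nodup) :
    shortestSimplePathCost c k ≤ pathCost c k t :=
  inf'_le _ (mem_simplePathTails.2 h)

theorem exists_pathCost_eq_shortestSimplePathCost (c : ι → ι → M) (k : ι) :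
    ∃ t, (k :: t).Nodup ∧ pathCost c k t = shortestSimplePathCost c k := by
  obtain ⟨t, ht, h⟩ := exists_mem_eq_inf' _ (pathCost c k)
  exact ⟨t, mem_simplePathTails.1 ht, h.symm⟩

theorem shortestSimplePathCost_le_add [IsOrderedAddMonoid M] (c : ι → ι → M)
    (hcycle : ∀ x t, (x :: t).Nodup → 0 ≤ pathCost c x t + c ((x :: t).getLast (by simp)) x)
    (i k : ι) : shortestSimplePathCost c i ≤ c i k + shortestSimplePathCost c k := by
  obtain ⟨t, ht, hd⟩ := exists_pathCost_eq_shortestSimplePathCost c k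
  rw [← hd]
  by_cases hi : i ∈ k :: t
  -- the shortest path from `k` passes through `i`: cut it there; the part from `k` to `i` closes
  -- up into a cycle of nonnegative cost
  · rcases List.mem_cons.1 hi with rfl | hit
    · have hloop : 0 ≤ c i i := by simpa [pathCost] using hcycle i [] (List.nodup_singleton i)
      calc shortestSimplePathCost c i ≤ pathCost c i t := shortestSimplePathCost_le c ht
        _ ≤ c i i + pathCost c i t := le_add_of_nonneg_left hloop
    · obtain ⟨s, u, rfl⟩ := List.append_of_mem hit
      have hcycle_i : 0 ≤ pathCost c k (s ++ [i]) + c i k := by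
        simpa using hcycle k (s ++ [i]) (ht.sublist (by simp))
      calc shortestSimplePathCost c i ≤ pathCost c i u :=
            shortestSimplePathCost_le c (ht.sublist (by simp))
        _ ≤ pathCost c k (s ++ [i]) + c i k + pathCost c i u := le_add_of_nonneg_left hcycle_i
        _ = c i k + pathCost c k (s ++ i :: u) := by
            rw [pathCost_append_cons c k i s u]; abel
  · exact shortestSimplePathCost_le c (List.nodup_cons.2 ⟨hi, ht⟩)

end ShortestPath

section Group

variable [Fintype ι] [DecidableEq ι] {G : Type*} [AddCommGroup G]

theorem sum_formPerm_eq_pathCost_add (c : ι → ι → G) (hdiag : ∀ i, c i i = 0) {x : ι}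
    {t : List ι} (h : (x :: t).Nodup) :
    ∑ z, c z ((x :: t).formPerm z) = pathCost c x t + c ((x :: t).getLast (by simp)) x := by
  induction t generalizing x with
  | nil => simp [pathCost, hdiag]
  | cons y t ih =>
    simp only [List.formPerm_cons_cons, Perm.coe_mul, Function.comp_apply,
      List.getLast_cons (List.cons_ne_nil y t), pathCost]
    set π := (y :: t).formPerm
    set b := (y :: t).getLast (by simp)
    have hx : x ∉ y :: t := (List.nodup_cons.1 h).1
    have hπx : π x = x := List.formPerm_apply_of_notMem hx
    have hπb : π b = y := List.formPerm_apply_getLast y t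
    have hxb : x ≠ b := fun hxb => hx (hxb ▸ List.getLast_mem _)
    -- composing with `swap x y` only changes the images of `x` and of `b`
    have hdiff : ∑ z, (c z (swap x y (π z)) - c z (π z)) =
        (c x y - c x x) + (c b x - c b y) := by
      rw [Fintype.sum_eq_add x b hxb]
      · simp [hπx, hπb]
      · rintro z ⟨hzx, hzb⟩
        rw [swap_apply_of_ne_of_ne (fun h => hzx (π.injective (h.trans hπx.symm)))
          (fun h => hzb (π.injective (h.trans hπb.symm))), sub_self]
    rw [sum_sub_distrib, ih (List.nodup_cons.1 h).2, sub_eq_iff_eq_add] at hdiff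
    rw [hdiff, hdiag]
    abel

variable [LinearOrder G] [IsOrderedAddMonoid G]

theorem exists_potential_of_sum_perm_nonneg (c : ι → ι → G) (hdiag : ∀ i, c i i = 0)
    (hperm : ∀ ρ : Perm ι, 0 ≤ ∑ z, c z (ρ z)) :
    ∃ d : ι → G, ∀ i k, d i ≤ c i k + d k :=
  ⟨shortestSimplePathCost c, shortestSimplePathCost_le_add c fun _ _ h =>
    sum_formPerm_eq_pathCost_add c hdiag h ▸ hperm _⟩

theorem exists_dual_of_optimal_assignment (A : Matrix ι ι G) (σ : Perm ι)
    (hσ : ∀ τ : Perm ι, ∑ i, A i (σ i) ≤ ∑ i, A i (τ i)) :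
    ∃ U V : ι → G, (∀ i j, U i + V j ≤ A i j) ∧ ∑ i, U i + ∑ j, V j = ∑ i, A i (σ i) := by
  set c : ι → ι → G := fun i k => A i (σ k) - A k (σ k)
  have hperm (ρ : Perm ι) : 0 ≤ ∑ z, c z (ρ z) := by
    have hρ : ∑ z, A (ρ z) (σ (ρ z)) = ∑ z, A z (σ z) := Equiv.sum_comp ρ fun z => A z (σ z)
    simpa [c, sum_sub_distrib, hρ] using hσ (ρ.trans σ)
  obtain ⟨d, hd⟩ := exists_potential_of_sum_perm_nonneg c (fun i => sub_self _) hperm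
  refine ⟨d, fun j => A (σ.symm j) j - d (σ.symm j), fun i j => ?_, ?_⟩
  · have hdi := hd i (σ.symm j)
    simp only [c, apply_symm_apply] at hdi
    calc d i + (A (σ.symm j) j - d (σ.symm j))
        ≤ A i j - A (σ.symm j) j + d (σ.symm j) + (A (σ.symm j) j - d (σ.symm j)) := by gcongr
      _ = A i j := by abel
  · rw [← Equiv.sum_comp σ fun j => A (σ.symm j) j - d (σ.symm j)]
    simp [sum_sub_distrib]

end Group

theorem exists_real_minorant_of_le_sum_perm [Fintype ι] (B : Matrix ι ι (WithTop ℝ)) {p : ℝ}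
    (hp : ∀ τ : Perm ι, (p : WithTop ℝ) ≤ ∑ i, B i (τ i)) :
    ∃ A : Matrix ι ι ℝ,
      (∀ i j, (A i j : WithTop ℝ) ≤ B i j) ∧ ∀ τ : Perm ι, p ≤ ∑ i, A i (τ i) := by
  obtain ⟨L, hL⟩ := (Set.finite_range fun ij : ι × ι => (B ij.1 ij.2).untopD 0).bddBelow
  -- the finite entries are `≥ L`, so an infinite entry `M` forces the total above `p`
  set M := L + max 0 (p - Fintype.card ι * L)
  refine ⟨fun i j => (B i j).untopD M, fun i j => WithTop.coe_untopD_le _ _, fun τ => ?_⟩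
  have hLA (i j : ι) : L ≤ (B i j).untopD M := by
    have := hL ⟨(i, j), rfl⟩
    cases h : B i j <;> simp_all [M]
  by_cases hτ : ∃ i, B i (τ i) = ⊤
  · obtain ⟨i₀, hi₀⟩ := hτ
    calc p ≤ (M - L) + ∑ _i : ι, L := by
          have := le_max_right 0 (p - Fintype.card ι * L)
          simp only [M, sum_const, card_univ, nsmul_eq_mul]
          linarith
      _ ≤ ∑ i, ((B i (τ i)).untopD M - L) + ∑ _i : ι, L := by
          gcongr
          simpa [hi₀] using single_le_sum (fun i _ => sub_nonneg.2 (hLA i (τ i))) (mem_univ i₀)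
      _ = ∑ i, (B i (τ i)).untopD M := by simp [sum_sub_distrib]
  · push Not at hτ
    have hcoe : ((∑ i, (B i (τ i)).untopD M : ℝ) : WithTop ℝ) = ∑ i, B i (τ i) := by
      rw [WithTop.coe_sum]
      refine sum_congr rfl fun i _ => ?_
      obtain ⟨r, hr⟩ := WithTop.ne_top_iff_exists.1 (hτ i)
      simp [← hr]
    exact_mod_cast hcoe ▸ hp τ

theorem exists_hungarian_pair_general
    (n : ℕ) (B : Matrix (Fin n) (Fin n) Rmin)
    (hB : ∃ σ : Equiv.Perm (Fin n), (∑ i, B i (σ i)) ≠ ⊤) :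
    ∃ U V : Fin n → ℝ,
      (∀ i j, ((U i + V j : ℝ) : Rmin) ≤ B i j) ∧
      (((∑ i, U i) + ∑ j, V j : ℝ) : Rmin) = mpPerm B := by
  have hle (τ : Perm (Fin n)) : mpPerm B ≤ ∑ i, B i (τ i) := inf_le (mem_univ τ)
  obtain ⟨σ₀, -, hσ₀⟩ := exists_mem_eq_inf univ univ_nonempty fun σ : Perm (Fin n) => ∑ i, B i (σ i)
  obtain ⟨p, hp⟩ : ∃ p : ℝ, (p : Rmin) = mpPerm B := by
    obtain ⟨σ, hσ⟩ := hB
    exact WithTop.ne_top_iff_exists.1 (ne_top_of_le_ne_top hσ (hle σ))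
  obtain ⟨A, hAB, hpA⟩ := exists_real_minorant_of_le_sum_perm B fun τ => hp ▸ hle τ
  have hAσ₀ : ∑ i, A i (σ₀ i) = p := by
    refine le_antisymm ?_ (hpA σ₀)
    have : ((∑ i, A i (σ₀ i) : ℝ) : WithTop ℝ) ≤ p := by
      rw [WithTop.coe_sum, hp, mpPerm, hσ₀]
      exact sum_le_sum fun i _ => hAB i (σ₀ i)
    exact_mod_cast this
  obtain ⟨U, V, hUV, hsum⟩ := exists_dual_of_optimal_assignment A σ₀ (hAσ₀ ▸ hpA)
  exact ⟨U, V, fun i j => (WithTop.coe_le_coe.2 (hUV i j)).trans (hAB i j), by rw [hsum, hAσ₀, hp]⟩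

/-- **Existence of Hungarian pairs.**
Let `B ∈ (ℝ ∪ {+∞})^{n×n}` with `perm B ≠ +∞`, i.e. some permutation `σ` has finite
weight `Σ_i B_{iσ(i)}`.  Then there exists a Hungarian pair with respect to `B`:
vectors `U, V ∈ ℝ^n` with `B_{ij} ≥ U_i + V_j` for all `i, j`, and
`U_1 + ⋯ + U_n + V_1 + ⋯ + V_n = perm B`. -/
theorem exists_hungarian_pair
    (n : ℕ) (hn : 1 ≤ n) (B : Matrix (Fin n) (Fin n) Rmin)
    (hB : ∃ σ : Equiv.Perm (Fin n), (∑ i, B i (σ i)) ≠ ⊤) :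
    ∃ U V : Fin n → ℝ,
      (∀ i j, ((U i + V j : ℝ) : Rmin) ≤ B i j) ∧
      (((∑ i, U i) + ∑ j, V j : ℝ) : Rmin) = mpPerm B :=
  exists_hungarian_pair_general n B hB
end
end

section
/- (Cuninghame-Green–Meijer factorization) Let P = ⊕_{k=0}^n P_k X^k be a formal polynomial over the min-plus semiring ℝ_min of degree n, i.e., with P_n ≠ +∞, and let P̂ : ℝ ∪ {+∞} → ℝ ∪ {+∞} be its associated polynomial function, P̂(x) = min_{0 ≤ k ≤ n} (P_k + k x). Then there exist a ∈ ℝ and c_1, …, c_n ∈ ℝ ∪ {+∞} with c_1 ≤ c_2 ≤ ⋯ ≤ c_n such that P̂(x) = a + min(x, c_1) + min(x, c_2) + ⋯ + min(x, c_n) for all x ∈ ℝ ∪ {+∞}; moreover a = P_n, and the sorted tuple (c_1, …, c_n) is uniquely determined by the function P̂. The numbers c_1, …, c_n are called the corners (roots) of P. -/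
open Finset

noncomputable section

/-- The min-plus polynomial function associated with the formal min-plus polynomial
`P = ⊕_{k=0}^n P_k X^k`, evaluated at `x ∈ ℝ ∪ {+∞}`:
`P̂ x = min_{0 ≤ k ≤ n} (P_k + k·x)` (where `k • x = x + ⋯ + x` `k` times, so that
`0 • (+∞) = 0`). -/
def mpPolyFun {n : ℕ} (P : Fin (n + 1) → Rmin) (x : Rmin) : Rmin :=
  Finset.univ.inf fun k : Fin (n + 1) => P k + (k : ℕ) • x

/-!
Write `P̂ x = min P₀ (x + R̂ x)`, where `R` is the polynomial with coefficients `P₁, …, Pₙ`.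
The function `h x = x + R̂ x` is monotone and attains the value `P₀` at some `t` (the largest
corner), so `P̂ x = h (min x t)`. Factoring `R̂` by induction, with corners `dᵢ`, the corners of
`P` are `t` and the `min t dᵢ`.

For uniqueness, at a real `x` the value `a + ∑ min x cᵢ` equals `a + n x` exactly when `x` is
at most the smallest corner. So the function determines `a` and the smallest corner, and after
cancelling that corner we can induct.
-/
theorem mpPolyFun_monotone {n : ℕ} (P : Fin (n + 1) → Rmin) : Monotone (mpPolyFun P) :=
  fun _ _ hxy => inf_mono_fun fun _ _ => by gcongr

theorem add_mpPolyFun {n : ℕ} (P : Fin (n + 1) → Rmin) (x : Rmin) :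
    x + mpPolyFun P x = univ.inf fun k : Fin (n + 1) => P k + ((k : ℕ) + 1) • x := by
  rw [mpPolyFun, apply_inf_eq_inf_comp (x + ·) (fun _ _ => (min_add_add_left _ _ _).symm)
    (WithTop.add_top x)]
  refine congrArg _ (funext fun k => ?_)
  rw [Function.comp_apply, succ_nsmul, add_comm _ x, add_left_comm]

theorem mpPolyFun_succ {n : ℕ} (P : Fin (n + 2) → Rmin) (x : Rmin) :
    mpPolyFun P x = min (P 0) (x + mpPolyFun (Fin.tail P) x) := by
  rw [add_mpPolyFun, mpPolyFun, Fin.univ_succ, inf_cons, inf_map]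
  simp [Fin.tail, Function.comp_def]

theorem exists_inf_add_nsmul_eq {ι : Type*} (s : Finset ι) (b : ι → Rmin) (k : ι → ℕ)
    (hk : ∀ i ∈ s, 0 < k i) (hb : ∃ i ∈ s, b i ≠ ⊤) (C : Rmin) :
    ∃ t : Rmin, s.inf (fun i => b i + k i • t) = C := by
  induction C using WithTop.recTopCoe with
  | top =>
    refine ⟨⊤, top_le_iff.mp (Finset.le_inf fun i hi => ?_)⟩
    rw [← Nat.succ_pred_eq_of_pos (hk i hi), succ_nsmul, WithTop.add_top, WithTop.add_top]
  | coe C =>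
    -- `t` is the largest of the points `(C - b i) / k i` where a finite term reaches `C`.
    obtain ⟨i₀, hi₀, hmax⟩ := (s.filter fun i => b i ≠ ⊤).exists_max_image
      (fun i => (C - (b i).untopD 0) / k i) (by
        obtain ⟨i, hi, hbi⟩ := hb
        exact ⟨i, mem_filter.mpr ⟨hi, hbi⟩⟩)
    rw [mem_filter] at hi₀
    obtain ⟨β, hβ⟩ := WithTop.ne_top_iff_exists.mp hi₀.2
    refine ⟨((C - β) / k i₀ : ℝ),
      le_antisymm ((inf_le hi₀.1).trans_eq ?_) (Finset.le_inf fun i hi => ?_)⟩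
    · have hk₀ : (k i₀ : ℝ) ≠ 0 := by exact_mod_cast (hk i₀ hi₀.1).ne'
      rw [← hβ, ← WithTop.coe_nsmul, ← WithTop.coe_add, WithTop.coe_inj, nsmul_eq_mul]
      field_simp
      ring
    · rcases eq_or_ne (b i) ⊤ with hbi | hbi
      · rw [hbi, WithTop.top_add]; exact le_top
      obtain ⟨γ, hγ⟩ := WithTop.ne_top_iff_exists.mp hbi
      have hki : (0 : ℝ) < k i := by exact_mod_cast hk i hi
      have := hmax i (mem_filter.mpr ⟨hi, hbi⟩)
      rw [← hβ, ← hγ, WithTop.untopD_coe, WithTop.untopD_coe, div_le_iff₀ hki] at this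
      rw [← hγ, ← WithTop.coe_nsmul, ← WithTop.coe_add, WithTop.coe_le_coe, nsmul_eq_mul]
      linarith

theorem exists_add_mpPolyFun_eq {n : ℕ} (P : Fin (n + 1) → Rmin) (hP : ∃ k, P k ≠ ⊤)
    (C : Rmin) : ∃ t : Rmin, t + mpPolyFun P t = C := by
  obtain ⟨k, hk⟩ := hP
  simp only [add_mpPolyFun]
  exact exists_inf_add_nsmul_eq _ _ _ (fun _ _ => Nat.succ_pos _) ⟨k, mem_univ k, hk⟩ C

theorem exists_mpPolyFun_eq_add_sum_min {n : ℕ} (P : Fin (n + 1) → Rmin)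
    (hP : P (Fin.last n) ≠ ⊤) :
    ∃ c : Fin n → Rmin, ∀ x, mpPolyFun P x = P (Fin.last n) + ∑ i, min x (c i) := by
  induction n with
  | zero => exact ⟨Fin.elim0, fun x => by simp [mpPolyFun]⟩
  | succ n ih =>
    obtain ⟨d, hd⟩ := ih (Fin.tail P) hP
    obtain ⟨t, ht⟩ := exists_add_mpPolyFun_eq (Fin.tail P) ⟨Fin.last n, hP⟩ (P 0)
    have hmono : Monotone fun y => y + mpPolyFun (Fin.tail P) y :=
      monotone_id.add (mpPolyFun_monotone _)
    refine ⟨Fin.cons t fun i => min t (d i), fun x => ?_⟩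
    calc mpPolyFun P x = min (P 0) (x + mpPolyFun (Fin.tail P) x) := mpPolyFun_succ P x
      _ = min t x + mpPolyFun (Fin.tail P) (min t x) := by rw [← ht, ← hmono.map_min]
      _ = _ := by
        rw [hd, Fin.sum_univ_succ]
        simp only [Fin.cons_zero, Fin.cons_succ, min_assoc, min_left_comm x t, min_comm x t]
        exact add_left_comm _ _ _

theorem coe_add_sum_min_eq_iff {ι : Type*} [Fintype ι] (b x : ℝ) (c : ι → Rmin) :
    (b : Rmin) + ∑ i, min (x : Rmin) (c i) = ((b + Fintype.card ι * x : ℝ) : Rmin) ↔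
      ∀ i, (x : Rmin) ≤ c i := by
  choose g hg using fun i => WithTop.ne_top_iff_exists.mp
    (ne_top_of_le_ne_top WithTop.coe_ne_top (min_le_left (x : Rmin) (c i)))
  have hgx : ∀ i ∈ univ, g i ≤ x := fun i _ => by
    exact_mod_cast (hg i).trans_le (min_le_left _ _)
  have hsum : ∑ _i : ι, x = Fintype.card ι * x := by simp
  simp_rw [← hg, ← min_eq_left_iff, ← hg]
  norm_cast
  rw [add_right_inj, ← hsum, sum_eq_sum_iff_of_le hgx]
  simp

theorem eq_of_add_sum_min_eq {n : ℕ} {a a' : ℝ} {c c' : Fin n → Rmin}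
    (hc : Monotone c) (hc' : Monotone c')
    (h : ∀ x : ℝ, (a : Rmin) + ∑ i, min (x : Rmin) (c i) = a' + ∑ i, min (x : Rmin) (c' i)) :
    a = a' ∧ c = c' := by
  induction n with
  | zero => exact ⟨by simpa using h 0, Subsingleton.elim _ _⟩
  | succ n ih =>
    have hbelow : ∀ (b : ℝ) (d : Fin (n + 1) → Rmin), Monotone d → ∀ x : ℝ,
        (b : Rmin) + ∑ i, min (x : Rmin) (d i) = ((b + (n + 1 : ℕ) * x : ℝ) : Rmin) ↔
          (x : Rmin) ≤ d 0 := fun b d hd x => by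
      simpa only [Fintype.card_fin] using (coe_add_sum_min_eq_iff b x d).trans
        ⟨fun hx => hx 0, fun hx i => hx.trans (hd (Fin.zero_le i))⟩
    obtain ⟨x₀, hx₀⟩ : ∃ x : ℝ, (x : Rmin) ≤ min (c 0) (c' 0) :=
      ⟨_, WithTop.coe_untopD_le _ 0⟩
    have ha : a = a' := by
      have h₀ := h x₀
      rw [(hbelow a c hc x₀).mpr (hx₀.trans (min_le_left _ _)),
        (hbelow a' c' hc' x₀).mpr (hx₀.trans (min_le_right _ _)), WithTop.coe_inj] at h₀
      linarith
    subst ha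
    have h0 : c 0 = c' 0 := WithTop.eq_of_forall_coe_le_iff fun x => by
      rw [← hbelow a c hc, ← hbelow a c' hc', h x]
    have htail : ∀ x : ℝ, (a : Rmin) + ∑ i, min (x : Rmin) (Fin.tail c i) =
        a + ∑ i, min (x : Rmin) (Fin.tail c' i) := fun x => by
      have hx := h x
      rw [Fin.sum_univ_succ, Fin.sum_univ_succ, h0, add_left_comm, add_left_comm (a : Rmin)] at hx
      exact WithTop.add_left_cancel (ne_top_of_le_ne_top WithTop.coe_ne_top (min_le_left _ _)) hx
    obtain ⟨-, ht⟩ := ih (hc.comp Fin.strictMono_succ.monotone)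
      (hc'.comp Fin.strictMono_succ.monotone) htail
    exact ⟨rfl, by rw [← Fin.cons_self_tail c, ← Fin.cons_self_tail c', h0]; exact congrArg _ ht⟩

/-- **Cuninghame-Green–Meijer factorization.**
Let `P = ⊕_{k=0}^n P_k X^k` be a formal min-plus polynomial of degree `n`, i.e. with
`P_n ≠ +∞`.  Then there exist `a ∈ ℝ` and `c_1 ≤ c_2 ≤ ⋯ ≤ c_n` in `ℝ ∪ {+∞}` such that
`P̂(x) = a + min(x, c_1) + ⋯ + min(x, c_n)` for all `x ∈ ℝ ∪ {+∞}` (that is,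
`P̂ = a ⊗ (x ⊕ c_1) ⊗ ⋯ ⊗ (x ⊕ c_n)` in the min-plus sense); moreover `a = P_n` and the
sorted tuple `(c_1, …, c_n)` is uniquely determined by the function `P̂`.  The
`c_1, …, c_n` are the corners (roots) of `P`. -/
theorem cuninghameGreen_meijer_factorization
    (n : ℕ) (P : Fin (n + 1) → Rmin) (hP : P (Fin.last n) ≠ ⊤) :
    ∃ (a : ℝ) (c : Fin n → Rmin), Monotone c ∧
      (∀ x : Rmin, mpPolyFun P x = (a : Rmin) + ∑ i, min x (c i)) ∧
      (a : Rmin) = P (Fin.last n) ∧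
      (∀ (a' : ℝ) (c' : Fin n → Rmin), Monotone c' →
        (∀ x : Rmin, mpPolyFun P x = (a' : Rmin) + ∑ i, min x (c' i)) →
        a' = a ∧ c' = c) := by
  obtain ⟨a, ha⟩ := WithTop.ne_top_iff_exists.mp hP
  obtain ⟨c, hc⟩ := exists_mpPolyFun_eq_add_sum_min P hP
  have hsorted : ∀ x, mpPolyFun P x = (a : Rmin) + ∑ i, min x ((c ∘ Tuple.sort c) i) := by
    intro x
    rw [hc, ← ha]
    exact congrArg _ (Equiv.sum_comp (Tuple.sort c) fun i => min x (c i)).symm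
  refine ⟨a, c ∘ Tuple.sort c, Tuple.monotone_sort c, hsorted, ha, fun a' c' hc' h' => ?_⟩
  exact eq_of_add_sum_min_eq hc' (Tuple.monotone_sort c) fun x => (h' x).symm.trans (hsorted x)
end
end

section
/- Let m, c, k ∈ ℂ^{n×n} be such that det(X c + k) ∈ ℂ[X] has degree n and all of its n roots λ_1, …, λ_n (counted with multiplicity) are nonzero, and det(X m + c) ∈ ℂ[X] has degree n and all of its n roots μ_1, …, μ_n (counted with multiplicity) are nonzero. Consider the pencil 𝒜_ε = ε X² m + X c + k. Then there exists ε₀ > 0 and functions L_1, …, L_n, L'_1, …, L'_n : (0, ε₀) → ℂ such that for every ε ∈ (0, ε₀) the polynomial det(𝒜_ε) ∈ ℂ[X] has degree 2n and its multiset of roots, counted with multiplicity, is exactly {L_1(ε), …, L_n(ε), L'_1(ε), …, L'_n(ε)}, with L_i(ε) → λ_i and ε L'_i(ε) → μ_i as ε → 0⁺ for each i = 1, …, n. In other words, 𝒜_ε has n eigenvalues asymptotically equivalent to λ_i ε⁰ and n eigenvalues asymptotically equivalent to μ_i ε^{−1}. -/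
/-!
For `ε > 0`, `P_ε = det 𝒜_ε` has degree `2n`, leading coefficient `εⁿ det m ≠ 0` and constant
coefficient `det k ≠ 0`, and its coefficients tend to those of `p = det (X c + k)` as `ε → 0`.
Since the degree drops in the limit, pass to the reversals `X^{2n} P_ε(1/X)`: they keep degree
`2n` and tend to `Xⁿ · Xⁿ p(1/X)`, whose roots are `0` (n times) and the `λᵢ⁻¹`. By continuity of
the roots of a family of fixed degree, `n` roots of `P_ε` tend to the `λᵢ` and the other `n`
escape to infinity. Likewise `Q_ε = det (X² m + X c + ε k)` keeps degree `2n`, satisfies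
`Q_ε(εX) = εⁿ P_ε(X)` and tends to `Xⁿ det (X m + c)`, so `n` roots `L'ᵢ` of `P_ε` satisfy
`ε L'ᵢ → μᵢ`; as `μᵢ ≠ 0` they escape to infinity. Inside a large disc the two decompositions of
the root multiset must agree, so the bounded roots from the first and the `L'ᵢ` from the second
together exhaust it.

Continuity of the roots is proved by splitting off, one at a time, a root `z_t` of `F_t` nearest
to a root `x` of the limit: `|lc F_t| · |z_t - x|^d ≤ |F_t(x)| → 0`.
-/

open Polynomial Filter Topology Finset

noncomputable section

/-- The affine pencil `X c + k`, as a matrix of polynomials in `ℂ[X]`. -/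
def affPencil {n : ℕ} (c k : Matrix (Fin n) (Fin n) ℂ) :
    Matrix (Fin n) (Fin n) (Polynomial ℂ) :=
  fun i j => Polynomial.C (c i j) * X + Polynomial.C (k i j)

/-- The perturbed quadratic pencil `𝒜_ε = ε X² m + X c + k`, as a matrix of
polynomials in `ℂ[X]`, for a parameter `ε > 0`. -/
def quadPencil {n : ℕ} (m c k : Matrix (Fin n) (Fin n) ℂ) (ε : ℝ) :
    Matrix (Fin n) (Fin n) (Polynomial ℂ) :=
  fun i j => Polynomial.C ((ε : ℂ) * m i j) * X ^ 2 +
    Polynomial.C (c i j) * X + Polynomial.C (k i j)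


lemma roots_eq_cons_roots_divByMonic {R : Type*} [CommRing R] [IsDomain R] {f : R[X]}
    (hf : f ≠ 0) {a : R} (ha : f.IsRoot a) : f.roots = a ::ₘ (f /ₘ (X - C a)).roots := by
  have hmul := mul_divByMonic_eq_iff_isRoot.2 ha
  calc f.roots = ((X - C a) * (f /ₘ (X - C a))).roots := by rw [hmul]
    _ = a ::ₘ (f /ₘ (X - C a)).roots := by
      rw [roots_mul (by rwa [hmul]), roots_X_sub_C, Multiset.singleton_add]

lemma reflect_add_eq_X_pow_mul_reverse {R : Type*} [Semiring R] {p : R[X]} {n : ℕ}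
    (hp : p.natDegree = n) : p.reflect (n + n) = X ^ n * p.reverse := by
  have h := reflect_mul p 1 hp.le (natDegree_one.trans_le (Nat.zero_le n))
  rw [reverse, hp, X_pow_mul]
  simpa [reflect_one] using h

lemma natDegree_reverse_of_coeff_zero_ne_zero {R : Type*} [Semiring R] {f : R[X]}
    (h0 : f.coeff 0 ≠ 0) : f.reverse.natDegree = f.natDegree := by
  rw [reverse_natDegree, natTrailingDegree_eq_zero.2 (Or.inr h0), Nat.sub_zero]

lemma Multiset.eq_of_add_eq_add_of_separated {α : Type*} {A₁ A₂ B₁ B₂ : Multiset α}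
    (q : α → Prop) [DecidablePred q] (h : A₁ + A₂ = B₁ + B₂) (hA₁ : ∀ a ∈ A₁, ¬ q a)
    (hA₂ : ∀ a ∈ A₂, q a) (hB₂ : ∀ b ∈ B₂, ¬ q b) (hcard : card B₁ ≤ card A₂) : A₂ = B₁ := by
  have hfilter := congrArg (Multiset.filter q) h
  rw [Multiset.filter_add, Multiset.filter_add, Multiset.filter_eq_nil.2 hA₁,
    Multiset.filter_eq_self.2 hA₂, Multiset.filter_eq_nil.2 hB₂, zero_add, add_zero] at hfilter
  exact Multiset.eq_of_le_of_card_le (hfilter ▸ Multiset.filter_le q B₁) hcard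

section RootsTransform

variable {K : Type*} [Field K]

lemma roots_comp_C_mul_X (f : K[X]) {a : K} (ha : a ≠ 0) :
    (f.comp (C a * X)).roots = f.roots.map (a⁻¹ * ·) := by
  classical
  ext z
  have hmul := rootMultiplicity_comp_C_mul_X_add_C f a 0 z ha.isUnit
  rw [map_zero, add_zero, add_zero] at hmul
  conv_rhs => rw [← inv_mul_cancel_left₀ ha z]
  rw [Multiset.count_map_eq_count' _ _ (mul_right_injective₀ (inv_ne_zero ha)), count_roots,
    count_roots, hmul]

lemma roots_reverse_X_sub_C {a : K} (ha : a ≠ 0) : (X - C a).reverse.roots = {a⁻¹} := by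
  have hX : (X : K[X]).reverse = 1 := by
    simpa only [C_1, one_mul] using (reverse_mul_X (C (1 : K))).trans (reverse_C 1)
  have h : (X - C a).reverse = C (-a) * X + C 1 := by
    rw [sub_eq_add_neg, ← C_neg, reverse_add_C, hX, natDegree_X, pow_one, add_comm, C_1]
  rw [h, roots_C_mul_X_add_C _ (neg_ne_zero.2 ha)]
  simp

lemma roots_reverse_multiset_prod_X_sub_C {s : Multiset K} (hs : (0 : K) ∉ s) :
    (s.map (X - C ·)).prod.reverse.roots = s.map (·⁻¹) := by
  induction s using Multiset.induction_on with
  | empty => simpa using congrArg roots (reverse_C (1 : K))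
  | cons a s ih =>
    rw [Multiset.mem_cons, not_or] at hs
    have hprod : (s.map (X - C ·)).prod ≠ 0 :=
      (monic_multiset_prod_of_monic _ _ fun b _ => monic_X_sub_C b).ne_zero
    rw [Multiset.map_cons, Multiset.prod_cons, reverse_mul_of_domain,
      roots_mul (mul_ne_zero (reverse_eq_zero.not.2 (X_sub_C_ne_zero a))
        (reverse_eq_zero.not.2 hprod)),
      roots_reverse_X_sub_C (Ne.symm hs.1), ih hs.2, Multiset.map_cons, Multiset.singleton_add]

lemma roots_reverse {f : K[X]} (hf : f.Splits) (h0 : f.coeff 0 ≠ 0) :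
    f.reverse.roots = f.roots.map (·⁻¹) := by
  have hf0 : f ≠ 0 := fun h => h0 (by simp [h])
  have hroot : (0 : K) ∉ f.roots := fun h =>
    h0 (coeff_zero_eq_eval_zero f ▸ (mem_roots hf0).1 h)
  conv_lhs => rw [hf.eq_prod_roots]
  rw [reverse_mul_of_domain, reverse_C, roots_C_mul _ (leadingCoeff_ne_zero.2 hf0),
    roots_reverse_multiset_prod_X_sub_C hroot]

lemma roots_eq_map_inv_roots_reverse {f : K[X]} (hf : f.Splits) (h0 : f.coeff 0 ≠ 0) :
    f.roots = f.reverse.roots.map (·⁻¹) := by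
  rw [roots_reverse hf h0, Multiset.map_map]
  simp

lemma ne_zero_of_mem_roots_reverse {f : K[X]} {z : K} (hz : z ∈ f.reverse.roots) : z ≠ 0 := by
  rintro rfl
  obtain ⟨hrev, hroot⟩ := mem_roots'.1 hz
  rw [IsRoot, ← coeff_zero_eq_eval_zero, coeff_zero_reverse, leadingCoeff_eq_zero] at hroot
  exact hrev (by rw [hroot, reverse_zero])

end RootsTransform

section RootContinuity

variable {α : Type*} {l : Filter α}

def nearestRoot (f : ℂ[X]) (x : ℂ) : ℂ :=
  if h : f.roots.toFinset.Nonempty then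
    (f.roots.toFinset.exists_min_image (fun w => ‖w - x‖) h).choose
  else x

lemma nearestRoot_mem_roots {f : ℂ[X]} (x : ℂ) (h : f.roots ≠ 0) :
    nearestRoot f x ∈ f.roots := by
  have hne : f.roots.toFinset.Nonempty := by simpa [Finset.nonempty_iff_ne_empty] using h
  rw [nearestRoot, dif_pos hne]
  exact Multiset.mem_toFinset.1
    (f.roots.toFinset.exists_min_image (fun w => ‖w - x‖) hne).choose_spec.1

lemma norm_nearestRoot_sub_le (f : ℂ[X]) (x : ℂ) {w : ℂ} (hw : w ∈ f.roots) :
    ‖nearestRoot f x - x‖ ≤ ‖w - x‖ := by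
  have hne : f.roots.toFinset.Nonempty := ⟨w, Multiset.mem_toFinset.2 hw⟩
  rw [nearestRoot, dif_pos hne]
  exact (f.roots.toFinset.exists_min_image (fun w => ‖w - x‖) hne).choose_spec.2 w
    (Multiset.mem_toFinset.2 hw)

lemma nnnorm_leadingCoeff_mul_nnnorm_nearestRoot_sub_pow_le (f : ℂ[X]) (x : ℂ) :
    ‖f.leadingCoeff‖₊ * ‖nearestRoot f x - x‖₊ ^ f.natDegree ≤ ‖f.eval x‖₊ := by
  have hf := IsAlgClosed.splits f
  have hprod (s : Multiset ℂ) : ‖s.prod‖₊ = (s.map (‖·‖₊)).prod :=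
    map_multiset_prod (nnnormHom (α := ℂ)) s
  rw [hf.eval_eq_prod_roots, nnnorm_mul, hf.natDegree_eq_card_roots, hprod, Multiset.map_map]
  gcongr
  rw [← Multiset.card_map (‖x - ·‖₊)]
  refine Multiset.pow_card_le_prod fun r hr => ?_
  obtain ⟨w, hw, rfl⟩ := Multiset.mem_map.1 hr
  simpa [← NNReal.coe_le_coe, norm_sub_rev x w] using norm_nearestRoot_sub_le f x hw

lemma tendsto_zero_of_tendsto_pow {f : α → ℝ} {d : ℕ} (hf : ∀ t, 0 ≤ f t) (hd : d ≠ 0)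
    (h : Tendsto (fun t => f t ^ d) l (𝓝 0)) : Tendsto f l (𝓝 0) := by
  have hroot : Tendsto (fun y : ℝ => y ^ (d⁻¹ : ℝ)) (𝓝 0) (𝓝 0) := by
    simpa [Real.zero_rpow (inv_ne_zero (Nat.cast_ne_zero.2 hd))] using
      (Real.continuous_rpow_const (inv_nonneg.2 (Nat.cast_nonneg d))).tendsto (0 : ℝ)
  exact (hroot.comp h).congr fun t => Real.pow_rpow_inv_natCast (hf t) hd

lemma tendsto_eval_of_tendsto_coeff {F : α → ℂ[X]} {p : ℂ[X]} {N : ℕ}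
    (hF : ∀ j, Tendsto (fun t => (F t).coeff j) l (𝓝 (p.coeff j)))
    (hp : p.natDegree ≤ N) (hdeg : ∀ᶠ t in l, (F t).natDegree ≤ N) (x : ℂ) :
    Tendsto (fun t => (F t).eval x) l (𝓝 (p.eval x)) := by
  rw [eval_eq_sum_range' (Nat.lt_succ_of_le hp)]
  refine (tendsto_finsetSum _ fun j _ => (hF j).mul_const _).congr' ?_
  filter_upwards [hdeg] with t ht
  rw [eval_eq_sum_range' (Nat.lt_succ_of_le ht)]

lemma tendsto_nearestRoot {F : α → ℂ[X]} {p : ℂ[X]} {x : ℂ} (hp : p ≠ 0) (hx : p.IsRoot x)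
    (hF : ∀ j, Tendsto (fun t => (F t).coeff j) l (𝓝 (p.coeff j)))
    (hdeg : ∀ᶠ t in l, (F t).natDegree = p.natDegree) :
    Tendsto (fun t => nearestRoot (F t) x) l (𝓝 x) := by
  have hd : p.natDegree ≠ 0 := (natDegree_pos_iff_degree_pos.2 (degree_pos_of_root hp hx)).ne'
  have hlc : p.leadingCoeff ≠ 0 := leadingCoeff_ne_zero.2 hp
  have hlead : Tendsto (fun t => (F t).leadingCoeff) l (𝓝 p.leadingCoeff) :=
    (hF p.natDegree).congr' (hdeg.mono fun t ht => by simp only [Polynomial.leadingCoeff, ht])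
  have heval : Tendsto (fun t => (F t).eval x) l (𝓝 0) :=
    hx.eq_zero ▸ tendsto_eval_of_tendsto_coeff hF le_rfl (hdeg.mono fun t ht => ht.le) x
  have hbound : Tendsto (fun t => ‖(F t).eval x‖ / ‖(F t).leadingCoeff‖) l (𝓝 0) := by
    have := heval.norm.div hlead.norm (norm_ne_zero_iff.2 hlc)
    rwa [norm_zero, zero_div] at this
  rw [tendsto_iff_norm_sub_tendsto_zero]
  refine tendsto_zero_of_tendsto_pow (fun _ => norm_nonneg _) hd
    (squeeze_zero' (Eventually.of_forall fun _ => by positivity) ?_ hbound)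
  filter_upwards [hdeg, hlead.eventually_ne hlc] with t ht hne
  rw [le_div_iff₀ (norm_pos_iff.2 hne), mul_comm, ← ht]
  exact_mod_cast nnnorm_leadingCoeff_mul_nnnorm_nearestRoot_sub_pow_le (F t) x

lemma tendsto_coeff_divByMonic_X_sub_C {F : α → ℂ[X]} {p : ℂ[X]} {z : α → ℂ} {x : ℂ}
    (hF : ∀ j, Tendsto (fun t => (F t).coeff j) l (𝓝 (p.coeff j)))
    (hdeg : ∀ᶠ t in l, (F t).natDegree = p.natDegree) (hz : Tendsto z l (𝓝 x)) (j : ℕ) :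
    Tendsto (fun t => (F t /ₘ (X - C (z t))).coeff j) l (𝓝 ((p /ₘ (X - C x)).coeff j)) := by
  rw [coeff_divByMonic_X_sub_C]
  refine (tendsto_finsetSum _ fun i _ => (hz.pow _).mul (hF i)).congr' ?_
  filter_upwards [hdeg] with t ht
  rw [coeff_divByMonic_X_sub_C, ht]

theorem exists_tendsto_roots {d : ℕ} {p : ℂ[X]} {lam : Fin d → ℂ} {F : α → ℂ[X]}
    (hp : p.natDegree = d) (hroots : p.roots = univ.val.map lam)
    (hF : ∀ j, Tendsto (fun t => (F t).coeff j) l (𝓝 (p.coeff j)))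
    (hdeg : ∀ᶠ t in l, (F t).natDegree = d) :
    ∃ r : Fin d → α → ℂ, (∀ᶠ t in l, (F t).roots = univ.val.map (fun i => r i t)) ∧
      ∀ i, Tendsto (r i) l (𝓝 (lam i)) := by
  induction d generalizing p F with
  | zero =>
    refine ⟨Fin.elim0, hdeg.mono fun t ht => ?_, fun i => i.elim0⟩
    simpa using Multiset.card_eq_zero.1 (Nat.le_zero.1 (ht ▸ card_roots' (F t)))
  | succ d ih =>
    have hp0 : p ≠ 0 := by rintro rfl; simp at hp
    have hroot : p.IsRoot (lam 0) :=
      isRoot_of_mem_roots (hroots ▸ Multiset.mem_map_of_mem _ (mem_univ_val 0))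
    set z := fun t => nearestRoot (F t) (lam 0)
    have hz : Tendsto z l (𝓝 (lam 0)) := tendsto_nearestRoot hp0 hroot hF (hp ▸ hdeg)
    have hzroot : ∀ᶠ t in l, F t ≠ 0 ∧ (F t).IsRoot (z t) := by
      filter_upwards [hdeg] with t ht
      have hFt : F t ≠ 0 := by rintro h; simp [h] at ht
      refine ⟨hFt, isRoot_of_mem_roots (nearestRoot_mem_roots _ ?_)⟩
      rw [← Multiset.card_pos, ← (IsAlgClosed.splits _).natDegree_eq_card_roots, ht]
      omega
    obtain ⟨r, hr, hrlim⟩ := ih (p := p /ₘ (X - C (lam 0))) (F := fun t => F t /ₘ (X - C (z t)))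
      (lam := fun i => lam i.succ)
      (by rw [natDegree_divByMonic _ (monic_X_sub_C _), hp, natDegree_X_sub_C]; rfl)
      (by
        rw [← Multiset.cons_inj_right (lam 0), ← roots_eq_cons_roots_divByMonic hp0 hroot,
          hroots]
        simp [List.ofFn_succ])
      (tendsto_coeff_divByMonic_X_sub_C hF (hp ▸ hdeg) hz)
      (by
        filter_upwards [hdeg] with t ht
        rw [natDegree_divByMonic _ (monic_X_sub_C _), ht, natDegree_X_sub_C]; rfl)
    refine ⟨Fin.cons z r, ?_, Fin.cases hz hrlim⟩
    filter_upwards [hzroot, hr] with t ht hrt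
    simp [roots_eq_cons_roots_divByMonic ht.1 ht.2, hrt, List.ofFn_succ]

theorem exists_tendsto_roots_of_tendsto_X_pow_mul {n : ℕ} {g : ℂ[X]} {ν : Fin n → ℂ}
    {F : α → ℂ[X]} (hg0 : g ≠ 0) (hg : g.natDegree = n) (hroots : g.roots = univ.val.map ν)
    (hF : ∀ j, Tendsto (fun t => (F t).coeff j) l (𝓝 ((X ^ n * g).coeff j)))
    (hdeg : ∀ᶠ t in l, (F t).natDegree = n + n) :
    ∃ s r : Fin n → α → ℂ,
      (∀ᶠ t in l, (F t).roots = univ.val.map (fun i => s i t) + univ.val.map (fun i => r i t)) ∧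
      (∀ i, Tendsto (s i) l (𝓝 0)) ∧ ∀ i, Tendsto (r i) l (𝓝 (ν i)) := by
  have hXg : X ^ n * g ≠ 0 := mul_ne_zero (pow_ne_zero _ X_ne_zero) hg0
  obtain ⟨r, hr, hlim⟩ := exists_tendsto_roots (lam := Fin.append (fun _ => 0) ν)
    (by rw [natDegree_mul (pow_ne_zero _ X_ne_zero) hg0, natDegree_X_pow, hg])
    (by
      simp [roots_mul hXg, hroots, List.ofFn_const, Multiset.nsmul_singleton,
        ← Multiset.coe_add, Multiset.coe_replicate])
    hF hdeg
  refine ⟨fun i => r (Fin.castAdd n i), fun i => r (Fin.natAdd n i), hr.mono fun t ht => ?_,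
    fun i => Fin.append_left (fun _ => (0 : ℂ)) ν i ▸ hlim (Fin.castAdd n i),
    fun i => Fin.append_right (fun _ => (0 : ℂ)) ν i ▸ hlim (Fin.natAdd n i)⟩
  rw [ht, Fin.univ_val_map, Fin.univ_val_map, Fin.univ_val_map, List.ofFn_add,
    ← Multiset.coe_add]
  rfl

end RootContinuity

section PolynomialMatrix

variable {ι R : Type*} [Fintype ι] [DecidableEq ι] [CommRing R]

lemma natDegree_det_le_of_natDegree_le (M : Matrix ι ι R[X]) {d : ℕ}
    (h : ∀ i j, (M i j).natDegree ≤ d) : M.det.natDegree ≤ Fintype.card ι * d := by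
  rw [Matrix.det_apply']
  refine natDegree_sum_le_of_forall_le _ _ fun σ _ => natDegree_mul_le.trans ?_
  rw [natDegree_intCast, zero_add]
  refine (natDegree_prod_le _ _).trans ?_
  simpa using Finset.sum_le_sum fun i (_ : i ∈ univ) => h (σ i) i

lemma coeff_det_of_natDegree_le (M : Matrix ι ι R[X]) {d : ℕ}
    (h : ∀ i j, (M i j).natDegree ≤ d) :
    M.det.coeff (Fintype.card ι * d) = (M.map (coeff · d)).det := by
  rw [Matrix.det_apply', finsetSum_coeff, Matrix.det_apply']
  refine Finset.sum_congr rfl fun σ _ => ?_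
  rw [← map_intCast (C : R →+* R[X]), coeff_C_mul, ← Finset.card_univ,
    coeff_prod_of_natDegree_le (s := univ) (fun i => M (σ i) i) d fun i _ => h (σ i) i]
  rfl

lemma coeff_zero_det (M : Matrix ι ι R[X]) : M.det.coeff 0 = (M.map (coeff · 0)).det := by
  simp_rw [coeff_zero_eq_eval_zero]
  exact RingHom.map_det (evalRingHom 0) M

end PolynomialMatrix

lemma continuous_coeff_det_add_smul {ι : Type*} [Fintype ι] [DecidableEq ι]
    (A B : Matrix ι ι ℂ[X]) (j : ℕ) :
    Continuous fun e : ℂ => (A + e • B).det.coeff j := by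
  set D : ℂ[X][X] := (A.map C + (X : ℂ[X][X]) • B.map C).det
  have hD (e : ℂ) : (A + e • B).det = D.eval (C e) := by
    rw [← coe_evalRingHom, RingHom.map_det]
    congr 1
    refine Matrix.ext fun i k => ?_
    simp only [RingHom.mapMatrix_apply, Matrix.map_apply, Matrix.add_apply, Matrix.smul_apply,
      smul_eq_mul, smul_eq_C_mul, coe_evalRingHom, eval_add, eval_mul, eval_C, eval_X]
  simp_rw [hD, eval_eq_sum, sum_def, finsetSum_coeff, ← C_pow, coeff_mul_C]
  fun_prop

lemma tendsto_norm_atTop_of_tendsto_mul {f : ℝ → ℂ} {μ : ℂ} (hμ : μ ≠ 0)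
    (hf : Tendsto (fun ε : ℝ => (ε : ℂ) * f ε) (𝓝[>] 0) (𝓝 μ)) :
    Tendsto (fun ε => ‖f ε‖) (𝓝[>] 0) atTop := by
  refine (tendsto_inv_nhdsGT_zero.atTop_mul_pos (norm_pos_iff.2 hμ) hf.norm).congr' ?_
  filter_upwards [self_mem_nhdsWithin] with ε (hε : 0 < ε)
  rw [norm_mul, Complex.norm_real, Real.norm_of_nonneg hε.le, inv_mul_cancel_left₀ hε.ne']

section Pencil

variable {n : ℕ} (m c k : Matrix (Fin n) (Fin n) ℂ)

lemma affPencil_eq : affPencil c k = (X : ℂ[X]) • c.map C + k.map C := by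
  ext i j : 1
  simp only [affPencil, Matrix.add_apply, Matrix.smul_apply, Matrix.map_apply, smul_eq_mul]
  ring

lemma coeff_det_affPencil : (affPencil c k).det.coeff n = c.det := by
  simpa [← affPencil_eq] using coeff_det_X_add_C_card c k

lemma coeff_zero_det_affPencil : (affPencil c k).det.coeff 0 = k.det := by
  rw [affPencil_eq, coeff_det_X_add_C_zero]

lemma natDegree_quadPencil_le (ε : ℝ) (i j : Fin n) : (quadPencil m c k ε i j).natDegree ≤ 2 :=
  natDegree_quadratic_le

lemma coeff_det_quadPencil (ε : ℝ) :
    (quadPencil m c k ε).det.coeff (n + n) = (ε : ℂ) ^ n * m.det := by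
  have h := coeff_det_of_natDegree_le _ (natDegree_quadPencil_le m c k ε)
  have hmap : (quadPencil m c k ε).map (coeff · 2) = (ε : ℂ) • m := by
    ext i j
    simp only [quadPencil, Matrix.map_apply, Matrix.smul_apply, smul_eq_mul, coeff_add,
      coeff_C_mul_X_pow, coeff_C_mul_X, coeff_C]
    norm_num
  rwa [Fintype.card_fin, hmap, Matrix.det_smul, Fintype.card_fin, mul_two] at h

lemma coeff_zero_det_quadPencil (ε : ℝ) : (quadPencil m c k ε).det.coeff 0 = k.det := by
  rw [coeff_zero_det]
  congr 1
  ext i j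
  simp [quadPencil]

lemma natDegree_det_quadPencil {ε : ℝ} (hε : ε ≠ 0) (hm : m.det ≠ 0) :
    (quadPencil m c k ε).det.natDegree = n + n := by
  refine le_antisymm ?_ (le_natDegree_of_ne_zero ?_)
  · simpa [mul_two] using natDegree_det_le_of_natDegree_le _ (natDegree_quadPencil_le m c k ε)
  · rw [coeff_det_quadPencil]
    exact mul_ne_zero (pow_ne_zero _ (Complex.ofReal_ne_zero.2 hε)) hm

lemma quadPencil_eq_add_smul (ε : ℝ) :
    quadPencil m c k ε = affPencil c k + (ε : ℂ) • ((X : ℂ[X]) ^ 2 • m.map C) := by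
  ext i j : 1
  simp only [quadPencil, affPencil, Matrix.add_apply, Matrix.smul_apply, Matrix.map_apply,
    smul_eq_mul, smul_eq_C_mul, C_mul]
  ring

lemma tendsto_coeff_det_quadPencil (j : ℕ) :
    Tendsto (fun ε : ℝ => (quadPencil m c k ε).det.coeff j) (𝓝 0)
      (𝓝 ((affPencil c k).det.coeff j)) := by
  simp_rw [quadPencil_eq_add_smul]
  have := (continuous_coeff_det_add_smul (affPencil c k) ((X : ℂ[X]) ^ 2 • m.map C) j).comp
    Complex.continuous_ofReal |>.tendsto 0
  simpa only [Function.comp_def, Complex.ofReal_zero, zero_smul, add_zero] using this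

lemma quadPencil_one_smul_eq (ε : ℝ) :
    quadPencil m c ((ε : ℂ) • k) 1 = (X : ℂ[X]) • affPencil m c + (ε : ℂ) • k.map C := by
  ext i j : 1
  simp only [quadPencil, affPencil, Matrix.add_apply, Matrix.smul_apply, Matrix.map_apply,
    smul_eq_mul, smul_eq_C_mul, C_mul, Complex.ofReal_one, one_mul]
  ring

lemma tendsto_coeff_det_quadPencil_one_smul (j : ℕ) :
    Tendsto (fun ε : ℝ => (quadPencil m c ((ε : ℂ) • k) 1).det.coeff j) (𝓝 0)
      (𝓝 ((X ^ n * (affPencil m c).det).coeff j)) := by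
  simp_rw [quadPencil_one_smul_eq]
  have := (continuous_coeff_det_add_smul ((X : ℂ[X]) • affPencil m c) (k.map C) j).comp
    Complex.continuous_ofReal |>.tendsto 0
  simpa only [Function.comp_def, Complex.ofReal_zero, zero_smul, add_zero, Matrix.det_smul,
    Fintype.card_fin] using this

lemma det_quadPencil_one_smul_comp (ε : ℝ) :
    (quadPencil m c ((ε : ℂ) • k) 1).det.comp (C (ε : ℂ) * X) =
      C ((ε : ℂ) ^ n) * (quadPencil m c k ε).det := by
  have hsmul := Matrix.det_smul (quadPencil m c k ε) (C (ε : ℂ))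
  rw [Fintype.card_fin] at hsmul
  rw [← coe_compRingHom_apply, RingHom.map_det, C_pow, ← hsmul]
  congr 1
  ext i j : 1
  simp only [RingHom.mapMatrix_apply, Matrix.map_apply, coe_compRingHom_apply, quadPencil,
    Matrix.smul_apply, smul_eq_mul, add_comp, mul_comp, C_comp, X_comp, pow_comp, C_mul,
    Complex.ofReal_one, one_mul]
  ring

end Pencil

section Eigenvalues

variable {n : ℕ} {m c k : Matrix (Fin n) (Fin n) ℂ}

lemma det_affPencil_ne_zero (h : (affPencil c k).det.natDegree = n) : (affPencil c k).det ≠ 0 := by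
  intro h0
  rw [h0, natDegree_zero] at h
  subst h
  simp at h0

lemma det_ne_zero_of_natDegree_det_affPencil (h : (affPencil c k).det.natDegree = n) :
    c.det ≠ 0 := by
  have hlc := leadingCoeff_ne_zero.2 (det_affPencil_ne_zero h)
  rwa [leadingCoeff, h, coeff_det_affPencil] at hlc

theorem exists_roots_det_quadPencil_tendsto_eigenvalues {lam : Fin n → ℂ} (hm : m.det ≠ 0)
    (hckdeg : (affPencil c k).det.natDegree = n)
    (hck : (affPencil c k).det.roots = univ.val.map lam) (hlam : ∀ i, lam i ≠ 0) :
    ∃ S L : Fin n → ℝ → ℂ,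
      (∀ᶠ ε in 𝓝[>] 0, (quadPencil m c k ε).det.roots =
        univ.val.map (fun i => S i ε) + univ.val.map (fun i => L i ε)) ∧
      (∀ i, Tendsto (fun ε => ‖S i ε‖) (𝓝[>] 0) atTop) ∧
      ∀ i, Tendsto (L i) (𝓝[>] 0) (𝓝 (lam i)) := by
  set p := (affPencil c k).det
  have hp0 : p.coeff 0 ≠ 0 := by
    rw [coeff_zero_eq_eval_zero]
    intro h
    obtain ⟨i, -, hi⟩ := Multiset.mem_map.1 (hck ▸ (mem_roots (det_affPencil_ne_zero hckdeg)).2 h)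
    exact hlam i hi
  have hk (ε : ℝ) : (quadPencil m c k ε).det.coeff 0 ≠ 0 := by
    rwa [coeff_zero_det_quadPencil, ← coeff_zero_det_affPencil c k]
  have hdeg : ∀ᶠ ε in 𝓝[>] (0 : ℝ), (quadPencil m c k ε).det.natDegree = n + n := by
    filter_upwards [self_mem_nhdsWithin] with ε (hε : 0 < ε)
    exact natDegree_det_quadPencil m c k hε.ne' hm
  have hcoeff (j : ℕ) : Tendsto (fun ε => (quadPencil m c k ε).det.reverse.coeff j) (𝓝[>] 0)
      (𝓝 ((X ^ n * p.reverse).coeff j)) := by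
    rw [← reflect_add_eq_X_pow_mul_reverse hckdeg, coeff_reflect]
    refine ((tendsto_coeff_det_quadPencil m c k _).mono_left nhdsWithin_le_nhds).congr' ?_
    filter_upwards [hdeg] with ε hε
    rw [coeff_reverse, hε]
  obtain ⟨s, r, hsr, hs, hr⟩ := exists_tendsto_roots_of_tendsto_X_pow_mul
    (ν := fun i => (lam i)⁻¹) (reverse_eq_zero.not.2 (det_affPencil_ne_zero hckdeg))
    ((natDegree_reverse_of_coeff_zero_ne_zero hp0).trans hckdeg)
    (by rw [roots_reverse (IsAlgClosed.splits p) hp0, hck, Multiset.map_map]; rfl)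
    hcoeff (hdeg.mono fun ε hε => (natDegree_reverse_of_coeff_zero_ne_zero (hk ε)).trans hε)
  refine ⟨fun i ε => (s i ε)⁻¹, fun i ε => (r i ε)⁻¹, ?_, fun i => ?_,
    fun i => by simpa using (hr i).inv₀ (inv_ne_zero (hlam i))⟩
  · filter_upwards [hsr] with ε hsrε
    rw [roots_eq_map_inv_roots_reverse (IsAlgClosed.splits _) (hk ε), hsrε, Multiset.map_add,
      Multiset.map_map, Multiset.map_map]
    rfl
  · have hs0 : ∀ᶠ ε in 𝓝[>] (0 : ℝ), s i ε ≠ 0 := hsr.mono fun ε hsrε =>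
      ne_zero_of_mem_roots_reverse
        (hsrε ▸ Multiset.mem_add.2 (Or.inl (Multiset.mem_map_of_mem _ (mem_univ_val i))))
    exact tendsto_norm_inv_nhdsNE_zero_atTop.comp (tendsto_nhdsWithin_iff.2 ⟨hs i, hs0⟩)

theorem exists_roots_det_quadPencil_mul_tendsto_eigenvalues {mu : Fin n → ℂ} (hm : m.det ≠ 0)
    (hmcdeg : (affPencil m c).det.natDegree = n)
    (hmc : (affPencil m c).det.roots = univ.val.map mu) :
    ∃ T L' : Fin n → ℝ → ℂ,
      (∀ᶠ ε in 𝓝[>] 0, (quadPencil m c k ε).det.roots =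
        univ.val.map (fun i => T i ε) + univ.val.map (fun i => L' i ε)) ∧
      ∀ i, Tendsto (fun ε : ℝ => (ε : ℂ) * L' i ε) (𝓝[>] 0) (𝓝 (mu i)) := by
  obtain ⟨s, r, hsr, -, hr⟩ := exists_tendsto_roots_of_tendsto_X_pow_mul
    (F := fun ε : ℝ => (quadPencil m c ((ε : ℂ) • k) 1).det)
    (det_affPencil_ne_zero hmcdeg) hmcdeg hmc
    (fun j => (tendsto_coeff_det_quadPencil_one_smul m c k j).mono_left nhdsWithin_le_nhds)
    (Eventually.of_forall fun _ => natDegree_det_quadPencil m c _ one_ne_zero hm)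
  refine ⟨fun i ε => (ε : ℂ)⁻¹ * s i ε, fun i ε => (ε : ℂ)⁻¹ * r i ε, ?_, fun i => ?_⟩
  · filter_upwards [self_mem_nhdsWithin, hsr] with ε (hε : 0 < ε) hsrε
    have hε' : (ε : ℂ) ≠ 0 := Complex.ofReal_ne_zero.2 hε.ne'
    have h := congrArg roots (det_quadPencil_one_smul_comp m c k ε)
    rw [roots_comp_C_mul_X _ hε', roots_C_mul _ (pow_ne_zero _ hε'), hsrε, Multiset.map_add,
      Multiset.map_map, Multiset.map_map] at h
    exact h.symm
  · refine (hr i).congr' ?_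
    filter_upwards [self_mem_nhdsWithin] with ε (hε : 0 < ε)
    rw [mul_inv_cancel_left₀ (Complex.ofReal_ne_zero.2 hε.ne')]

end Eigenvalues

theorem najman_generic_splitting_general
    (n : ℕ) (m c k : Matrix (Fin n) (Fin n) ℂ)
    (lam : Fin n → ℂ) (mu : Fin n → ℂ)
    (hckdeg : (affPencil c k).det.natDegree = n)
    (hck : (affPencil c k).det.roots = Multiset.map lam Finset.univ.val)
    (hlam : ∀ i, lam i ≠ 0)
    (hmcdeg : (affPencil m c).det.natDegree = n)
    (hmc : (affPencil m c).det.roots = Multiset.map mu Finset.univ.val)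
    (hmu : ∀ i, mu i ≠ 0) :
    ∃ ε₀ > (0 : ℝ), ∃ L L' : Fin n → ℝ → ℂ,
      (∀ ε ∈ Set.Ioo (0 : ℝ) ε₀,
        (quadPencil m c k ε).det.natDegree = 2 * n ∧
        (quadPencil m c k ε).det.roots =
          Multiset.map (fun i => L i ε) Finset.univ.val +
          Multiset.map (fun i => L' i ε) Finset.univ.val) ∧
      (∀ i, Tendsto (fun ε : ℝ => L i ε) (𝓝[>] (0 : ℝ)) (𝓝 (lam i))) ∧
      (∀ i, Tendsto (fun ε : ℝ => (ε : ℂ) * L' i ε) (𝓝[>] (0 : ℝ)) (𝓝 (mu i))) := by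
  have hm : m.det ≠ 0 := det_ne_zero_of_natDegree_det_affPencil hmcdeg
  obtain ⟨S, L, hSL, hS, hL⟩ := exists_roots_det_quadPencil_tendsto_eigenvalues hm hckdeg hck hlam
  obtain ⟨T, L', hTL', hL'⟩ :=
    exists_roots_det_quadPencil_mul_tendsto_eigenvalues (k := k) hm hmcdeg hmc
  set R := ∑ i, ‖lam i‖ + 1
  have hLR (i : Fin n) : ∀ᶠ ε in 𝓝[>] 0, ‖L i ε‖ < R :=
    (hL i).norm.eventually_lt_const (by
      linarith [Finset.single_le_sum (fun j _ => norm_nonneg (lam j)) (mem_univ i)])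
  have hL'R (i : Fin n) : ∀ᶠ ε in 𝓝[>] 0, R ≤ ‖L' i ε‖ :=
    (tendsto_norm_atTop_of_tendsto_mul (hmu i) (hL' i)).eventually_ge_atTop R
  have key : ∀ᶠ ε in 𝓝[>] (0 : ℝ), (quadPencil m c k ε).det.natDegree = 2 * n ∧
      (quadPencil m c k ε).det.roots =
        univ.val.map (fun i => L i ε) + univ.val.map (fun i => L' i ε) := by
    filter_upwards [self_mem_nhdsWithin, hSL, hTL', eventually_all.2 hLR,
      eventually_all.2 fun i => (hS i).eventually_ge_atTop R, eventually_all.2 hL'R]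
      with ε (hε : 0 < ε) hSLε hTL'ε hLε hSε hL'ε
    refine ⟨(natDegree_det_quadPencil m c k hε.ne' hm).trans (two_mul n).symm, ?_⟩
    rw [hTL'ε, ← Multiset.eq_of_add_eq_add_of_separated (‖·‖ < R) (hSLε.symm.trans hTL'ε)]
    · simpa using hSε
    · simpa using hLε
    · simpa using hL'ε
    · simp
  obtain ⟨ε₀, hε₀, hsub⟩ := mem_nhdsGT_iff_exists_Ioo_subset.1 key
  exact ⟨ε₀, hε₀, L, L', fun ε hε => hsub hε, hL, hL'⟩

/-- **Generic Najman-type splitting for `𝒜_ε = ε X² m + X c + k`.**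
Suppose `det (X c + k)` has degree `n` and nonzero roots `λ_1, …, λ_n` (with
multiplicity), and `det (X m + c)` has degree `n` and nonzero roots `μ_1, …, μ_n`
(with multiplicity).  Then, for all small `ε > 0`, `det 𝒜_ε` has degree `2n`, and its
multiset of roots is exactly `{L_1 ε, …, L_n ε, L'_1 ε, …, L'_n ε}` where
`L_i ε → λ_i` and `ε L'_i ε → μ_i` as `ε → 0⁺`: the pencil `𝒜_ε` has `n` eigenvalues
asymptotically equivalent to `λ_i ε⁰` and `n` eigenvalues asymptotically equivalent
to `μ_i ε^{-1}`. -/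
theorem najman_generic_splitting
    (n : ℕ) (hn : 1 ≤ n) (m c k : Matrix (Fin n) (Fin n) ℂ)
    (lam : Fin n → ℂ) (mu : Fin n → ℂ)
    (hckdeg : (affPencil c k).det.natDegree = n)
    (hck : (affPencil c k).det.roots = Multiset.map lam Finset.univ.val)
    (hlam : ∀ i, lam i ≠ 0)
    (hmcdeg : (affPencil m c).det.natDegree = n)
    (hmc : (affPencil m c).det.roots = Multiset.map mu Finset.univ.val)
    (hmu : ∀ i, mu i ≠ 0) :
    ∃ ε₀ > (0 : ℝ), ∃ L L' : Fin n → ℝ → ℂ,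
      (∀ ε ∈ Set.Ioo (0 : ℝ) ε₀,
        (quadPencil m c k ε).det.natDegree = 2 * n ∧
        (quadPencil m c k ε).det.roots =
          Multiset.map (fun i => L i ε) Finset.univ.val +
          Multiset.map (fun i => L' i ε) Finset.univ.val) ∧
      (∀ i, Tendsto (fun ε : ℝ => L i ε) (𝓝[>] (0 : ℝ)) (𝓝 (lam i))) ∧
      (∀ i, Tendsto (fun ε : ℝ => (ε : ℂ) * L' i ε) (𝓝[>] (0 : ℝ)) (𝓝 (mu i))) :=
  najman_generic_splitting_general n m c k lam mu hckdeg hck hlam hmcdeg hmc hmu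
end
end

section
/- (iii) Under the Weierstrass-form hypothesis on the pencil X c + k, the pencil 𝒜_ε = ε X² m + X c + k has at least 2 q_0 − q'_0 eigenvalues identically equal to zero: for every ε > 0, the multiplicity of 0 as a root of the polynomial det(𝒜_ε) ∈ ℂ[X] is at least 2 q_0 − q'_0. -/
/-!
After multiplying by the invertible matrices `P` and `Q`, the pencil becomes the Weierstrass
pencil `(X·I + J) ⊕ (X·N + I)` plus a perturbation `ε X² P m Q` all of whose entries are
divisible by `X²`. Give weight `1` to the last row of every nilpotent block of `J`, and to the
first column of every such block of size at least `2`. In `X·I + J_s(0)` the last row and the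
first column are divisible by `X`, and their common entry is `0` when `s ≥ 2`; hence every
entry is divisible by `X` raised to its row weight plus its column weight, and so is every
term of the Leibniz expansion of the determinant. The weights add up to
`q_0 + (q_0 - q'_0)`.
-/

open Polynomial Filter Topology Finset

noncomputable section

/-- The `s × s` Jordan block `J_s(α)`, with `α` on the diagonal and `1` on the
superdiagonal. -/
def jordanBlock (s : ℕ) (α : ℂ) : Matrix (Fin s) (Fin s) ℂ :=
  fun i j => if (j : ℕ) = (i : ℕ) then α else if (j : ℕ) = (i : ℕ) + 1 then 1 else 0

/-- **The Weierstrass-form hypothesis on the pencil `X c + k`**: there are invertible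
matrices `P, Q` such that `P (X c + k) Q` is the block-diagonal pencil
`(X·I + J) ⊕ (X·N + I)`, where `J` is block diagonal made of `bJ` Jordan blocks
`J_{szJ i}(αJ i)` (those with `αJ i = 0` being the nilpotent ones, of sizes
`s_0^1, …, s_0^{q_0}`), and `N` is block diagonal made of `qinf` nilpotent Jordan
blocks `J_{szN i}(0)` (of sizes `s_∞^1, …, s_∞^{q_∞}`). -/
structure WeierstrassForm (n : ℕ) (c k : Matrix (Fin n) (Fin n) ℂ) where
  /-- number of Jordan blocks of `J` -/
  bJ : ℕ
  /-- sizes of the Jordan blocks of `J` -/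
  szJ : Fin bJ → ℕ
  szJ_pos : ∀ i, 1 ≤ szJ i
  /-- eigenvalues of the Jordan blocks of `J` -/
  αJ : Fin bJ → ℂ
  /-- number of (nilpotent) Jordan blocks of `N` -/
  qinf : ℕ
  /-- sizes of the Jordan blocks of `N` -/
  szN : Fin qinf → ℕ
  szN_pos : ∀ i, 1 ≤ szN i
  /-- identification of the index set with the blocks -/
  e : Fin n ≃ ((Σ i : Fin bJ, Fin (szJ i)) ⊕ (Σ i : Fin qinf, Fin (szN i)))
  P : Matrix (Fin n) (Fin n) ℂ
  Q : Matrix (Fin n) (Fin n) ℂ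
  hP : IsUnit P.det
  hQ : IsUnit Q.det
  hW : P.map Polynomial.C * affPencil c k * Q.map Polynomial.C =
    (Matrix.fromBlocks
      (fun a b => (if a = b then (X : Polynomial ℂ) else 0) +
        Polynomial.C (Matrix.blockDiagonal'
          (fun i => jordanBlock (szJ i) (αJ i)) a b))
      0 0
      (fun a b => Polynomial.C (Matrix.blockDiagonal'
          (fun i => jordanBlock (szN i) 0) a b) * X +
        (if a = b then 1 else 0))).submatrix e e

namespace WeierstrassForm

variable {n : ℕ} {c k : Matrix (Fin n) (Fin n) ℂ} (W : WeierstrassForm n c k)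

/-- `q_0`: the number of nilpotent Jordan blocks of `J`. -/
def q0 : ℕ := (Finset.univ.filter fun i => W.αJ i = 0).card

/-- `q'_0`: the number of one-dimensional nilpotent Jordan blocks of `J`. -/
def q0' : ℕ := (Finset.univ.filter fun i => W.αJ i = 0 ∧ W.szJ i = 1).card

/-- `d_0 = s_0^1 + ⋯ + s_0^{q_0}`. -/
def d0 : ℕ := ∑ i ∈ Finset.univ.filter (fun i => W.αJ i = 0), W.szJ i

/-- `d_∞ = s_∞^1 + ⋯ + s_∞^{q_∞}`. -/
def dinf : ℕ := ∑ i, W.szN i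

/-- `r = n − d_0 − d_∞`, the number of finite nonzero eigenvalues of `X c + k`. -/
def r : ℕ := n - W.d0 - W.dinf

end WeierstrassForm

theorem Matrix.pow_sum_add_sum_dvd_det {R ι : Type*} [CommRing R] [Fintype ι] [DecidableEq ι]
    (x : R) (B : Matrix ι ι R) (u v : ι → ℕ) (h : ∀ i j, x ^ (u i + v j) ∣ B i j) :
    x ^ (∑ i, u i + ∑ j, v j) ∣ B.det := by
  rw [Matrix.det_apply]
  refine Finset.dvd_sum fun σ _ => ?_
  rw [Units.smul_def, zsmul_eq_mul]
  refine Dvd.dvd.mul_left ?_ _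
  calc x ^ (∑ i, u i + ∑ j, v j) = ∏ j, x ^ (u (σ j) + v j) := by
        rw [Finset.prod_pow_eq_pow_sum, Finset.sum_add_distrib, Equiv.sum_comp σ u]
    _ ∣ ∏ j, B (σ j) j := Finset.prod_dvd_prod_of_dvd _ _ fun j _ => h (σ j) j

theorem jordanBlock_zero_apply_of_succ_eq {s : ℕ} {i : Fin s} (hi : (i : ℕ) + 1 = s)
    (j : Fin s) : jordanBlock s 0 i j = 0 := by
  have := j.isLt
  simp only [jordanBlock]
  split_ifs <;> first | rfl | omega

theorem jordanBlock_zero_apply_of_eq_zero {s : ℕ} (i : Fin s) {j : Fin s} (hj : (j : ℕ) = 0) :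
    jordanBlock s 0 i j = 0 := by
  simp only [jordanBlock]
  split_ifs <;> first | rfl | omega

section JordanWeights

variable {b : ℕ} (s : Fin b → ℕ) (α : Fin b → ℂ)

open scoped Classical in
def lastRowWeight (a : Σ i, Fin (s i)) : ℕ :=
  if α a.1 = 0 ∧ (a.2 : ℕ) + 1 = s a.1 then 1 else 0

open scoped Classical in
def firstColWeight (a : Σ i, Fin (s i)) : ℕ :=
  if α a.1 = 0 ∧ (a.2 : ℕ) = 0 ∧ 2 ≤ s a.1 then 1 else 0

theorem lastRowWeight_le_one (a : Σ i, Fin (s i)) : lastRowWeight s α a ≤ 1 := by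
  unfold lastRowWeight; split_ifs <;> omega

theorem firstColWeight_le_one (a : Σ i, Fin (s i)) : firstColWeight s α a ≤ 1 := by
  unfold firstColWeight; split_ifs <;> omega

theorem lastRowWeight_add_firstColWeight_self_le_one (a : Σ i, Fin (s i)) :
    lastRowWeight s α a + firstColWeight s α a ≤ 1 := by
  unfold lastRowWeight firstColWeight; split_ifs <;> omega

theorem blockDiagonal'_jordanBlock_apply_eq_zero {a a' : Σ i, Fin (s i)}
    (hw : lastRowWeight s α a + firstColWeight s α a' ≠ 0) :
    Matrix.blockDiagonal' (fun i => jordanBlock (s i) (α i)) a a' = 0 := by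
  obtain ⟨p, x⟩ := a
  obtain ⟨p', y⟩ := a'
  by_cases hp : p = p'
  · subst hp
    rw [Matrix.blockDiagonal'_apply_eq]
    by_cases hx : α p = 0 ∧ (x : ℕ) + 1 = s p
    · rw [hx.1]; exact jordanBlock_zero_apply_of_succ_eq hx.2 y
    have hy : α p = 0 ∧ (y : ℕ) = 0 ∧ 2 ≤ s p := by
      by_contra hy; simp [lastRowWeight, firstColWeight, hx, hy] at hw
    rw [hy.1]; exact jordanBlock_zero_apply_of_eq_zero x hy.2.1
  · exact Matrix.blockDiagonal'_apply_ne _ _ _ hp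

theorem pow_weight_dvd_jordanPencil_apply (a a' : Σ i, Fin (s i)) :
    (X : ℂ[X]) ^ (lastRowWeight s α a + firstColWeight s α a') ∣
      (if a = a' then X else 0) +
        C (Matrix.blockDiagonal' (fun i => jordanBlock (s i) (α i)) a a') := by
  by_cases hw : lastRowWeight s α a + firstColWeight s α a' = 0
  · simp [hw]
  rw [blockDiagonal'_jordanBlock_apply_eq_zero s α hw, map_zero, add_zero]
  split_ifs with h
  · subst h
    exact (pow_dvd_pow X (lastRowWeight_add_firstColWeight_self_le_one s α a)).trans
      (pow_one X).dvd
  · exact dvd_zero _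

theorem sum_lastRowWeight (hs : ∀ i, 1 ≤ s i) :
    ∑ a, lastRowWeight s α a = #{i | α i = 0} := by
  rw [Finset.card_filter, Fintype.sum_sigma]
  refine Finset.sum_congr rfl fun i _ => ?_
  simp only [lastRowWeight]
  rw [Finset.sum_boole, Nat.cast_id]
  split_ifs with h
  · refine Finset.card_eq_one.2 ⟨⟨s i - 1, by have := hs i; omega⟩, ?_⟩
    ext x
    simp only [h, true_and, Finset.mem_filter_univ, Finset.mem_singleton, Fin.ext_iff]
    omega
  · simp [h]

theorem sum_firstColWeight :
    ∑ a, firstColWeight s α a = #{i | α i = 0 ∧ 2 ≤ s i} := by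
  rw [Finset.card_filter, Fintype.sum_sigma]
  refine Finset.sum_congr rfl fun i _ => ?_
  simp only [firstColWeight]
  rw [Finset.sum_boole, Nat.cast_id]
  split_ifs with h
  · refine Finset.card_eq_one.2 ⟨⟨0, by omega⟩, ?_⟩
    ext x
    simp only [h, and_true, true_and, Finset.mem_filter_univ, Finset.mem_singleton, Fin.ext_iff]
  · simp only [Finset.card_eq_zero, Finset.filter_eq_empty_iff]
    tauto

end JordanWeights

theorem Matrix.isUnit_det_map {R S ι : Type*} [CommRing R] [CommRing S] [Fintype ι]
    [DecidableEq ι] (f : R →+* S) {M : Matrix ι ι R} (hM : IsUnit M.det) :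
    IsUnit (M.map f).det := by
  rw [← RingHom.mapMatrix_apply, ← RingHom.map_det]
  exact hM.map f

theorem quadPencil_eq_affPencil_add {n : ℕ} (m c k : Matrix (Fin n) (Fin n) ℂ) (ε : ℝ) :
    quadPencil m c k ε = affPencil c k + (X ^ 2 : ℂ[X]) • ((ε : ℂ) • m).map C := by
  ext i j : 1
  simp only [quadPencil, affPencil, Matrix.add_apply, Matrix.smul_apply, Matrix.map_apply,
    smul_eq_mul, map_mul]
  ring

namespace WeierstrassForm

variable {n : ℕ} {c k : Matrix (Fin n) (Fin n) ℂ} (W : WeierstrassForm n c k)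

def canonicalPencil :
    Matrix ((Σ i, Fin (W.szJ i)) ⊕ (Σ i, Fin (W.szN i)))
      ((Σ i, Fin (W.szJ i)) ⊕ (Σ i, Fin (W.szN i))) ℂ[X] :=
  Matrix.fromBlocks
    (fun a b => (if a = b then X else 0) +
      C (Matrix.blockDiagonal' (fun i => jordanBlock (W.szJ i) (W.αJ i)) a b))
    0 0
    (fun a b => C (Matrix.blockDiagonal' (fun i => jordanBlock (W.szN i) 0) a b) * X +
      (if a = b then 1 else 0))

theorem map_mul_affPencil_mul_map :
    W.P.map C * affPencil c k * W.Q.map C = W.canonicalPencil.submatrix W.e W.e :=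
  W.hW

theorem pow_weight_dvd_canonicalPencil_apply (a b) :
    (X : ℂ[X]) ^ (Sum.elim (lastRowWeight W.szJ W.αJ) 0 a +
      Sum.elim (firstColWeight W.szJ W.αJ) 0 b) ∣ W.canonicalPencil a b := by
  rcases a with a | a <;> rcases b with b | b
  · exact pow_weight_dvd_jordanPencil_apply W.szJ W.αJ a b
  · exact dvd_zero _
  · exact dvd_zero _
  · simp

theorem card_two_le_add_q0' : #{i | W.αJ i = 0 ∧ 2 ≤ W.szJ i} + W.q0' = W.q0 := by
  rw [q0, q0', ← Finset.card_union_of_disjoint]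
  · congr 1
    ext i
    have := W.szJ_pos i
    simp only [Finset.mem_union, Finset.mem_filter_univ]
    constructor
    · rintro (h | h) <;> exact h.1
    · intro h; by_cases hs : W.szJ i = 1 <;> [right; left] <;> exact ⟨h, by omega⟩
  · exact Finset.disjoint_filter.2 fun i _ h h' => by omega

theorem pow_dvd_det_affPencil_add_X_sq_smul (R : Matrix (Fin n) (Fin n) ℂ[X]) :
    (X : ℂ[X]) ^ (2 * W.q0 - W.q0') ∣ (affPencil c k + (X ^ 2 : ℂ[X]) • R).det := by
  set u := fun i => Sum.elim (lastRowWeight W.szJ W.αJ) 0 (W.e i)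
  set v := fun j => Sum.elim (firstColWeight W.szJ W.αJ) 0 (W.e j)
  have hentry : ∀ i j, (X : ℂ[X]) ^ (u i + v j) ∣
      (W.P.map C * (affPencil c k + (X ^ 2 : ℂ[X]) • R) * W.Q.map C) i j := by
    intro i j
    have huv : u i + v j ≤ 2 := by
      have hu : u i ≤ 1 := by
        simp only [u]; rcases W.e i with a | a; exacts [lastRowWeight_le_one _ _ a, zero_le_one]
      have hv : v j ≤ 1 := by
        simp only [v]; rcases W.e j with a | a; exacts [firstColWeight_le_one _ _ a, zero_le_one]
      omega
    rw [Matrix.mul_add, Matrix.add_mul, W.map_mul_affPencil_mul_map, Matrix.mul_smul,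
      Matrix.smul_mul, Matrix.add_apply, Matrix.submatrix_apply, Matrix.smul_apply, smul_eq_mul]
    exact dvd_add (W.pow_weight_dvd_canonicalPencil_apply _ _)
      (dvd_mul_of_dvd_left (pow_dvd_pow X huv) _)
  have hsum : 2 * W.q0 - W.q0' ≤ ∑ i, u i + ∑ j, v j := by
    simp only [u, v, Equiv.sum_comp W.e, Fintype.sum_sum_type, Sum.elim_inl, Sum.elim_inr,
      Pi.zero_apply, Finset.sum_const_zero, add_zero, sum_lastRowWeight _ _ W.szJ_pos,
      sum_firstColWeight]
    have := W.card_two_le_add_q0'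
    have : #{i | W.αJ i = 0} = W.q0 := rfl
    omega
  have hdet := (pow_dvd_pow X hsum).trans (Matrix.pow_sum_add_sum_dvd_det X _ u v hentry)
  rwa [Matrix.det_mul, Matrix.det_mul, (Matrix.isUnit_det_map C W.hQ).dvd_mul_right,
    (Matrix.isUnit_det_map C W.hP).dvd_mul_left] at hdet

end WeierstrassForm

theorem corollary_iii_general
    (n : ℕ) (m c k : Matrix (Fin n) (Fin n) ℂ)
    (W : WeierstrassForm n c k) :
    ∀ ε : ℝ, 0 < ε →
      (X : Polynomial ℂ) ^ (2 * W.q0 - W.q0') ∣ (quadPencil m c k ε).det := by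
  intro ε _
  rw [quadPencil_eq_affPencil_add]
  exact W.pow_dvd_det_affPencil_add_X_sq_smul _

/-- **Corollary 1 (iii).**  Under the Weierstrass-form hypothesis on `X c + k`, the
pencil `𝒜_ε = ε X² m + X c + k` has at least `2 q_0 − q'_0` eigenvalues identically
equal to zero: for every `ε > 0`, the multiplicity of `0` as a root of the polynomial
`det 𝒜_ε ∈ ℂ[X]` is at least `2 q_0 − q'_0` (expressed as `X^{2q_0 − q'_0} ∣ det 𝒜_ε`,
so that the statement also covers the degenerate case `det 𝒜_ε = 0`). -/
theorem corollary_iii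
    (n : ℕ) (hn : 1 ≤ n) (m c k : Matrix (Fin n) (Fin n) ℂ)
    (W : WeierstrassForm n c k) :
    ∀ ε : ℝ, 0 < ε →
      (X : Polynomial ℂ) ^ (2 * W.q0 - W.q0') ∣ (quadPencil m c k ε).det :=
  corollary_iii_general n m c k W
end
end
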